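/- arXiv:1710.10602 — 6 statements merged into one kernel-verified Lean document; each statement's English description precedes it below -/
import Mathlib

section
/- Let V be Lebesgue measure restricted to B(0,1) ⊂ ℝⁿ and V_t its dilation by t. Then liminf_{t→0⁺} ‖M V_t(·) − V(ℝⁿ)/|·|ⁿ‖_{L^{1,∞}(ℝⁿ)} ≥ |B(0,1)|²/2^{n−1} > 0. In particular, M V_t does not converge to V(ℝⁿ)/|x|ⁿ in L^{1,∞}(ℝⁿ). -/
open MeasureTheory Metric Set Filter
open scoped ENNReal Topology

/-- The weak `L^{p,∞}` quasinorm of `f` restricted to a set `A`. -/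
noncomputable def wnormOn {α : Type*} [MeasurableSpace α] (μ : Measure α)
    (f : α → ℝ) (p : ℝ) (A : Set α) : ℝ≥0∞ :=
  ⨆ (l : ℝ) (_ : 0 < l), ENNReal.ofReal l * (μ (A ∩ {x | l < |f x|})) ^ (1 / p)

/-- The Hardy–Littlewood maximal function of a measure, real-valued. -/
noncomputable def maxFn {n : ℕ} (μ : Measure (EuclideanSpace ℝ (Fin n)))
    (x : EuclideanSpace ℝ (Fin n)) : ℝ :=
  (⨆ (r : ℝ) (_ : 0 < r), μ (ball x r) / ENNReal.ofReal (r ^ n)).toReal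

/-!
Every ball of radius `r` carries `V_t`-mass at most `|B| (r/t)ⁿ`, so `M V_t ≤ |B| / tⁿ`
everywhere, while `|B| / |x|ⁿ > |B| / sⁿ` on the punctured ball of radius `s < t`. Testing the
weak-`L¹` quasinorm at the level `|B| / sⁿ - |B| / tⁿ` on that ball gives `|B|² (1 - (s/t)ⁿ)`,
hence, letting `s → 0`, the bound `|B|²` for every `t > 0`. (A single radius such as `s = t/2`
does not suffice when `n = 1`, where the constant `|B|² / 2^{n-1}` is `|B|²` itself.)
-/
lemma le_wnormOn_one_univ {α : Type*} [MeasurableSpace α] (μ : Measure α) {f : α → ℝ} {l : ℝ} (hl : 0 < l) {S : Set α}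
    (hS : S ⊆ {x | l < |f x|}) :
    ENNReal.ofReal l * μ S ≤ wnormOn μ f 1 univ := by
  refine le_iSup₂_of_le l hl ?_
  rw [div_one, ENNReal.rpow_one, univ_inter]
  gcongr

section Dilation

variable {E : Type*} [NormedAddCommGroup E] [NormedSpace ℝ E] [MeasurableSpace E]
  [BorelSpace E] [FiniteDimensional ℝ E] (μ : Measure E) [μ.IsAddHaarMeasure]

lemma map_smul_restrict_unitBall_ball_le {t : ℝ} (ht : 0 < t) (x : E) {r : ℝ} (hr : 0 < r) :
    (μ.restrict (ball 0 1)).map (t • ·) (ball x r)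
      ≤ ENNReal.ofReal ((r / t) ^ Module.finrank ℝ E) * μ (ball 0 1) := by
  have hmeas : Measurable (t • · : E → E) := measurable_const_smul t
  rw [Measure.map_apply hmeas measurableSet_ball,
    Measure.restrict_apply (hmeas measurableSet_ball)]
  calc μ ((t • ·) ⁻¹' ball x r ∩ ball 0 1) ≤ μ ((t • ·) ⁻¹' ball x r) :=
        measure_mono inter_subset_left
    _ = μ (ball (t⁻¹ • x) (r / t)) := by
        rw [preimage_smul₀ ht.ne', _root_.smul_ball (inv_ne_zero ht.ne'), Real.norm_eq_abs,
          abs_inv, abs_of_pos ht, inv_mul_eq_div]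
    _ = _ := μ.addHaar_ball_of_pos _ (div_pos hr ht)

variable [Nontrivial E] {μ}

lemma ofReal_sq_mul_one_sub_pow_le_wnormOn {t u : ℝ} (ht : 0 < t) (hu₀ : 0 < u) (hu₁ : u < 1)
    {g : E → ℝ} (hg : ∀ x, g x ≤ (μ (ball 0 1)).toReal / t ^ Module.finrank ℝ E) :
    ENNReal.ofReal ((μ (ball 0 1)).toReal ^ 2 * (1 - u ^ Module.finrank ℝ E))
      ≤ wnormOn μ (fun x => g x - (μ (ball 0 1)).toReal / ‖x‖ ^ Module.finrank ℝ E) 1 univ := by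
  set d := Module.finrank ℝ E
  set V := (μ (ball (0 : E) 1)).toReal
  have hV : 0 < V := ENNReal.toReal_pos (measure_ball_pos μ _ one_pos).ne' measure_ball_lt_top.ne
  have hd : d ≠ 0 := Module.finrank_pos.ne'
  set s := u * t
  have hs : 0 < s := mul_pos hu₀ ht
  have hst : s < t := mul_lt_of_lt_one_left ht hu₁
  set l := V / s ^ d - V / t ^ d
  have hl : 0 < l := sub_pos.mpr <| div_lt_div_of_pos_left hV (by positivity) <|
    pow_lt_pow_left₀ hst hs.le hd
  have hsub : ball (0 : E) s \ {0} ⊆ {x | l < |g x - V / ‖x‖ ^ d|} := by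
    rintro x ⟨hxs, hx0⟩
    rw [mem_ball_zero_iff] at hxs
    have hx : 0 < ‖x‖ := norm_pos_iff.mpr hx0
    have : V / s ^ d < V / ‖x‖ ^ d :=
      div_lt_div_of_pos_left hV (by positivity) (pow_lt_pow_left₀ hxs hx.le hd)
    rw [mem_ofPred_eq, abs_sub_comm]
    linarith [hg x, le_abs_self (V / ‖x‖ ^ d - g x)]
  calc ENNReal.ofReal (V ^ 2 * (1 - u ^ d))
      = ENNReal.ofReal l * (ENNReal.ofReal (s ^ d) * ENNReal.ofReal V) := by
        rw [← ENNReal.ofReal_mul (by positivity), ← ENNReal.ofReal_mul (by positivity)]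
        congr 1
        simp only [l, s, mul_pow]
        field_simp
    _ = ENNReal.ofReal l * μ (ball (0 : E) s \ {0}) := by
        rw [measure_sdiff_null (measure_singleton 0), μ.addHaar_ball_of_pos _ hs,
          ENNReal.ofReal_toReal measure_ball_lt_top.ne]
    _ ≤ _ := le_wnormOn_one_univ μ hl hsub

lemma ofReal_sq_le_wnormOn {t : ℝ} (ht : 0 < t) {g : E → ℝ}
    (hg : ∀ x, g x ≤ (μ (ball 0 1)).toReal / t ^ Module.finrank ℝ E) :
    ENNReal.ofReal ((μ (ball 0 1)).toReal ^ 2)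
      ≤ wnormOn μ (fun x => g x - (μ (ball 0 1)).toReal / ‖x‖ ^ Module.finrank ℝ E) 1 univ := by
  set d := Module.finrank ℝ E
  set V := (μ (ball (0 : E) 1)).toReal
  have hd : d ≠ 0 := Module.finrank_pos.ne'
  have hlim : Tendsto (fun u : ℝ => ENNReal.ofReal (V ^ 2 * (1 - u ^ d))) (𝓝[>] 0)
      (𝓝 (ENNReal.ofReal (V ^ 2))) := by
    have hcont : Continuous fun u : ℝ => V ^ 2 * (1 - u ^ d) := by fun_prop
    refine ENNReal.tendsto_ofReal (tendsto_nhdsWithin_of_tendsto_nhds ?_)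
    simpa [zero_pow hd] using hcont.tendsto 0
  refine le_of_tendsto hlim ?_
  filter_upwards [Ioo_mem_nhdsGT one_pos] with u hu
  exact ofReal_sq_mul_one_sub_pow_le_wnormOn ht hu.1 hu.2 hg

end Dilation

lemma maxFn_le_of_measure_ball_le {n : ℕ} {μ : Measure (EuclideanSpace ℝ (Fin n))}
    {x : EuclideanSpace ℝ (Fin n)} {C : ℝ} (hC : 0 ≤ C)
    (h : ∀ r, 0 < r → μ (ball x r) ≤ ENNReal.ofReal (C * r ^ n)) :
    maxFn μ x ≤ C := by
  refine ENNReal.toReal_le_of_le_ofReal hC (iSup₂_le fun r hr => ?_)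
  rw [ENNReal.div_le_iff (ENNReal.ofReal_pos.mpr (by positivity)).ne' ENNReal.ofReal_ne_top,
    ← ENNReal.ofReal_mul hC]
  exact h r hr

lemma maxFn_map_smul_restrict_unitBall_le {n : ℕ} {t : ℝ} (ht : 0 < t)
    (x : EuclideanSpace ℝ (Fin n)) :
    maxFn ((volume.restrict (ball (0 : EuclideanSpace ℝ (Fin n)) 1)).map (t • ·)) x
      ≤ (volume (ball (0 : EuclideanSpace ℝ (Fin n)) 1)).toReal / t ^ n := by
  refine maxFn_le_of_measure_ball_le (by positivity) fun r hr => ?_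
  calc _ ≤ ENNReal.ofReal ((r / t) ^ n) * volume (ball (0 : EuclideanSpace ℝ (Fin n)) 1) := by
        simpa only [finrank_euclideanSpace_fin]
          using map_smul_restrict_unitBall_ball_le volume ht x hr
    _ = ENNReal.ofReal ((r / t) ^ n)
          * ENNReal.ofReal (volume (ball (0 : EuclideanSpace ℝ (Fin n)) 1)).toReal := by
        rw [ENNReal.ofReal_toReal measure_ball_lt_top.ne]
    _ = _ := by
        rw [← ENNReal.ofReal_mul (by positivity)]
        congr 1
        rw [div_pow]
        field_simp

/-- For `V` = Lebesgue measure on the unit ball and `V_t` its dilations,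
`liminf_{t→0⁺} ‖M V_t - V(ℝⁿ)/|·|ⁿ‖_{L^{1,∞}(ℝⁿ)} ≥ |B(0,1)|²/2^{n-1} > 0`; in particular
`M V_t` does not converge to `V(ℝⁿ)/|x|ⁿ` in `L^{1,∞}(ℝⁿ)`. -/
theorem stmt_6 {n : ℕ} (hn : 0 < n) :
    0 < ENNReal.ofReal
        ((volume (ball (0:EuclideanSpace ℝ (Fin n)) 1)).toReal ^ 2 / 2 ^ (n - 1)) ∧
    ENNReal.ofReal
        ((volume (ball (0:EuclideanSpace ℝ (Fin n)) 1)).toReal ^ 2 / 2 ^ (n - 1))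
      ≤ Filter.liminf (fun t : ℝ =>
          wnormOn volume
            (fun x : EuclideanSpace ℝ (Fin n) =>
              maxFn (Measure.map (fun y : EuclideanSpace ℝ (Fin n) => t • y)
                  (volume.restrict (ball (0:EuclideanSpace ℝ (Fin n)) 1))) x
                - (volume (ball (0:EuclideanSpace ℝ (Fin n)) 1)).toReal / ‖x‖ ^ n)
            1 Set.univ) (𝓝[>] (0:ℝ)) ∧
    ¬ Tendsto (fun t : ℝ =>
          wnormOn volume
            (fun x : EuclideanSpace ℝ (Fin n) =>
              maxFn (Measure.map (fun y : EuclideanSpace ℝ (Fin n) => t • y)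
                  (volume.restrict (ball (0:EuclideanSpace ℝ (Fin n)) 1))) x
                - (volume (ball (0:EuclideanSpace ℝ (Fin n)) 1)).toReal / ‖x‖ ^ n)
            1 Set.univ) (𝓝[>] (0:ℝ)) (𝓝 0) := by
  have : Nonempty (Fin n) := ⟨⟨0, hn⟩⟩
  set V := (volume (ball (0 : EuclideanSpace ℝ (Fin n)) 1)).toReal
  have hV : 0 < V := ENNReal.toReal_pos (measure_ball_pos _ _ one_pos).ne' measure_ball_lt_top.ne
  have hbound : ∀ t : ℝ, 0 < t → ENNReal.ofReal (V ^ 2) ≤ wnormOn volume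
      (fun x : EuclideanSpace ℝ (Fin n) =>
        maxFn ((volume.restrict (ball (0 : EuclideanSpace ℝ (Fin n)) 1)).map (t • ·)) x
          - V / ‖x‖ ^ n) 1 univ := fun t ht => by
    have h := ofReal_sq_le_wnormOn (μ := volume) ht (g := fun x =>
      maxFn ((volume.restrict (ball (0 : EuclideanSpace ℝ (Fin n)) 1)).map (t • ·)) x)
    rw [finrank_euclideanSpace_fin] at h
    exact h (maxFn_map_smul_restrict_unitBall_le ht)
  have hconst : ENNReal.ofReal (V ^ 2 / 2 ^ (n - 1)) ≤ ENNReal.ofReal (V ^ 2) :=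
    ENNReal.ofReal_le_ofReal (div_le_self (by positivity) (one_le_pow₀ one_le_two))
  have hbound' : ∀ᶠ t in 𝓝[>] (0 : ℝ), ENNReal.ofReal (V ^ 2) ≤ _ :=
    eventually_mem_nhdsWithin.mono hbound
  have hpos : 0 < ENNReal.ofReal (V ^ 2) := ENNReal.ofReal_pos.mpr (by positivity)
  refine ⟨ENNReal.ofReal_pos.mpr (by positivity),
    hconst.trans (le_liminf_of_le (by isBoundedDefault) hbound'), fun hlim => ?_⟩
  obtain ⟨t, hle, hlt⟩ :=
    (hbound'.and (hlim.eventually (gt_mem_nhds hpos))).exists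
  exact hle.not_gt hlt
end

section
/- Let Ω be homogeneous of degree 0 on ℝⁿ with L¹-modulus of continuity ω(t) = sup_{|h|≤t} ∫_{S^{n−1}} |Ω(x'+h) − Ω(x')| dσ(x'), and let α ∈ [0,n). Then for every ρ > 0 and every y ∈ ℝⁿ, ∫_{|x|>ρ} |Ω(x−y) − Ω(x)|/|x|^{n−α} dx ≤ |y|^α ∫₀^{|y|/ρ} ω(s)/s^{1+α} ds. -/
open MeasureTheory Metric Set Filter
open scoped ENNReal Topology

/-- The `L¹` integral continuity modulus of `Ω`:
`ω(t) = sup_{|h| ≤ t} ∫_{S^{n-1}} |Ω(x'+h) - Ω(x')| dσ(x')`. -/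
noncomputable def omegaMod (n : ℕ) (Ω : EuclideanSpace ℝ (Fin n) → ℝ) (t : ℝ) : ℝ≥0∞ :=
  ⨆ (h : EuclideanSpace ℝ (Fin n)) (_ : ‖h‖ ≤ t),
    ∫⁻ x' : sphere (0:EuclideanSpace ℝ (Fin n)) 1,
      ENNReal.ofReal |Ω ((x' : EuclideanSpace ℝ (Fin n)) + h) - Ω (x' : EuclideanSpace ℝ (Fin n))|
      ∂(volume : Measure (EuclideanSpace ℝ (Fin n))).toSphere

/-!
In polar coordinates `x = r x'`, homogeneity gives `Ω(x - y) - Ω(x) = Ω(x' + h) - Ω(x')` with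
`h = -y / r`, so the spherical integral at radius `r` is at most `ω(|y| / r)`. The left-hand side
is therefore bounded by `∫_ρ^∞ r^(α-1) ω(|y|/r) dr`, which is the right-hand side after the
substitution `s = |y| / r`.
-/

section Polar

variable {E : Type*} [NormedAddCommGroup E] [NormedSpace ℝ E] [MeasurableSpace E] [BorelSpace E]
  [FiniteDimensional ℝ E] [Nontrivial E] (μ : Measure E) [μ.IsAddHaarMeasure]

-- Only an inequality, because Tonelli is used without any measurability of `F`.
theorem lintegral_le_lintegral_Ioi_lintegral_sphere (F : E → ℝ≥0∞) :
    ∫⁻ x, F x ∂μ ≤ ∫⁻ r in Ioi (0 : ℝ), ENNReal.ofReal (r ^ (Module.finrank ℝ E - 1)) *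
      ∫⁻ x : sphere (0 : E) 1, F (r • (x : E)) ∂μ.toSphere := by
  have hpolar := μ.measurePreserving_homeomorphUnitSphereProd.lintegral_comp_emb
    (homeomorphUnitSphereProd E).measurableEmbedding (fun p => F (p.2.1 • p.1.1))
  calc ∫⁻ x, F x ∂μ = ∫⁻ x : ({0}ᶜ : Set E), F x ∂μ.comap Subtype.val := by
        rw [lintegral_subtype_comap (measurableSet_singleton 0).compl, restrict_compl_singleton]
    _ = ∫⁻ p, F (p.2.1 • p.1.1) ∂(μ.toSphere.prod (Measure.volumeIoiPow _)) := by
        rw [← hpolar]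
        refine lintegral_congr fun x => ?_
        simp [smul_inv_smul₀ (norm_ne_zero_iff.2 x.2)]
    _ ≤ ∫⁻ r, ∫⁻ x, F (r.1 • x.1) ∂μ.toSphere ∂(Measure.volumeIoiPow _) := by
        rw [← lintegral_prod_swap]
        exact lintegral_prod_le _
    _ = _ := by
        rw [Measure.volumeIoiPow, lintegral_withDensity_eq_lintegral_mul_non_measurable _
          (by fun_prop) (.of_forall fun _ => ENNReal.ofReal_lt_top)]
        exact lintegral_subtype_comap measurableSet_Ioi
          (fun r => ENNReal.ofReal (r ^ _) * ∫⁻ x : sphere (0 : E) 1, F (r • (x : E)) ∂μ.toSphere)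

theorem setLIntegral_norm_gt_le {ρ : ℝ} (hρ : 0 ≤ ρ) (F : E → ℝ≥0∞) :
    ∫⁻ x in {x | ρ < ‖x‖}, F x ∂μ ≤
      ∫⁻ r in Ioi ρ, ENNReal.ofReal (r ^ (Module.finrank ℝ E - 1)) *
        ∫⁻ x : sphere (0 : E) 1, F (r • (x : E)) ∂μ.toSphere := by
  have hS : MeasurableSet {x : E | ρ < ‖x‖} := measurableSet_lt measurable_const measurable_norm
  rw [← lintegral_indicator hS]
  refine (lintegral_le_lintegral_Ioi_lintegral_sphere μ _).trans_eq ?_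
  rw [← lintegral_indicator measurableSet_Ioi, ← lintegral_indicator measurableSet_Ioi]
  refine lintegral_congr fun r => ?_
  by_cases hr0 : 0 < r
  · have hnorm : ∀ x : sphere (0 : E) 1, ‖r • (x : E)‖ = r := by simp [norm_smul, hr0.le]
    by_cases hr : ρ < r <;> simp [indicator_apply, hnorm, hr, hr0]
  · have hr : ¬ρ < r := by linarith
    simp [indicator_apply, hr, hr0]

end Polar

theorem lintegral_Ioo_eq_lintegral_Ioi_comp_div {c ρ : ℝ} (hc : 0 < c) (hρ : 0 < ρ)
    (w : ℝ → ℝ≥0∞) :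
    ∫⁻ s in Ioo 0 (c / ρ), w s = ∫⁻ t in Ioi ρ, ENNReal.ofReal (c / t ^ 2) * w (c / t) := by
  have himage : (c / ·) '' Ioi ρ = Ioo 0 (c / ρ) := by
    ext s
    constructor
    · rintro ⟨t, ht, rfl⟩
      exact ⟨div_pos hc (hρ.trans ht), div_lt_div_of_pos_left hc hρ ht⟩
    · rintro ⟨hs0, hs⟩
      refine ⟨c / s, ?_, div_div_cancel₀ hc.ne'⟩
      rwa [mem_Ioi, lt_div_iff₀ hs0, mul_comm, ← lt_div_iff₀ hρ]
  have hderiv : ∀ t ∈ Ioi ρ, HasDerivWithinAt (c / ·) (-(c / t ^ 2)) (Ioi ρ) t := fun t ht => by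
    simpa [div_eq_mul_inv] using
      ((hasDerivAt_inv (hρ.trans ht).ne').const_mul c).hasDerivWithinAt
  have hanti : AntitoneOn (c / ·) (Ioi ρ) := fun a ha _ _ hab =>
    div_le_div_of_nonneg_left hc.le (hρ.trans ha) hab
  rw [← himage, lintegral_image_eq_lintegral_deriv_mul_of_antitoneOn measurableSet_Ioi hderiv hanti]
  simp only [neg_neg]

theorem ofReal_rpow_mul_lintegral_Ioo_eq {c ρ : ℝ} (hc : 0 < c) (hρ : 0 < ρ) (α : ℝ)
    (w : ℝ → ℝ≥0∞) :
    ENNReal.ofReal (c ^ α) * ∫⁻ s in Ioo 0 (c / ρ), w s / ENNReal.ofReal (s ^ (1 + α))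
      = ∫⁻ t in Ioi ρ, ENNReal.ofReal (t ^ (α - 1)) * w (c / t) := by
  rw [lintegral_Ioo_eq_lintegral_Ioi_comp_div hc hρ,
    ← lintegral_const_mul' _ _ ENNReal.ofReal_ne_top]
  refine setLIntegral_congr_fun measurableSet_Ioi fun t ht => ?_
  have ht0 : 0 < t := hρ.trans ht
  have hct : 0 < (c / t) ^ (1 + α) := Real.rpow_pos_of_pos (div_pos hc ht0) _
  have hexp : c ^ α * (c / t ^ 2) * ((c / t) ^ (1 + α))⁻¹ = t ^ (α - 1) := by
    rw [Real.div_rpow hc.le ht0.le, Real.rpow_add hc, Real.rpow_add ht0, Real.rpow_sub ht0,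
      Real.rpow_one, Real.rpow_one]
    have := (Real.rpow_pos_of_pos hc α).ne'
    field_simp
  rw [← hexp, ENNReal.ofReal_mul (by positivity), ENNReal.ofReal_mul (by positivity),
    ENNReal.ofReal_inv_of_pos hct, div_eq_mul_inv (w _)]
  ring

section HomogeneousKernel

variable {n : ℕ} {Ω : EuclideanSpace ℝ (Fin n) → ℝ}

local notation "ℝⁿ" => EuclideanSpace ℝ (Fin n)

theorem lintegral_sphere_le_omegaMod (hΩhom : ∀ s : ℝ, 0 < s → ∀ x, Ω (s • x) = Ω x)
    {r : ℝ} (hr : 0 < r) (y : ℝⁿ) :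
    ∫⁻ x : sphere (0 : ℝⁿ) 1, ENNReal.ofReal |Ω (r • (x : ℝⁿ) - y) - Ω (r • (x : ℝⁿ))|
        ∂(volume : Measure ℝⁿ).toSphere
      ≤ omegaMod n Ω (‖y‖ / r) := by
  refine le_iSup₂_of_le (-(r⁻¹ • y)) ?_ (le_of_eq (lintegral_congr fun x => ?_))
  · simp [norm_smul, abs_of_pos hr, div_eq_inv_mul]
  · rw [← hΩhom r hr (x + -(r⁻¹ • y)), hΩhom r hr x, smul_add, smul_neg, smul_inv_smul₀ hr.ne',
      ← sub_eq_add_neg]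

theorem ofReal_pow_mul_lintegral_sphere_le (hn : 0 < n)
    (hΩhom : ∀ s : ℝ, 0 < s → ∀ x, Ω (s • x) = Ω x) (α : ℝ) {r : ℝ} (hr : 0 < r) (y : ℝⁿ) :
    ENNReal.ofReal (r ^ (n - 1)) * ∫⁻ x : sphere (0 : ℝⁿ) 1,
        ENNReal.ofReal |Ω (r • (x : ℝⁿ) - y) - Ω (r • (x : ℝⁿ))|
          / ENNReal.ofReal (‖r • (x : ℝⁿ)‖ ^ ((n : ℝ) - α)) ∂(volume : Measure ℝⁿ).toSphere
      ≤ ENNReal.ofReal (r ^ (α - 1)) * omegaMod n Ω (‖y‖ / r) := by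
  have hnorm : ∀ x : sphere (0 : ℝⁿ) 1, ‖r • (x : ℝⁿ)‖ = r := fun x => by simp [norm_smul, hr.le]
  have hexp : r ^ (n - 1) / r ^ ((n : ℝ) - α) = r ^ (α - 1) := by
    rw [← Real.rpow_natCast, Nat.cast_pred hn, ← Real.rpow_sub hr]
    ring_nf
  simp only [hnorm, div_eq_mul_inv (ENNReal.ofReal _)]
  rw [lintegral_mul_const' _ _ (ENNReal.inv_ne_top.2 (ENNReal.ofReal_pos.2 (by positivity)).ne'),
    ← hexp, ENNReal.ofReal_div_of_pos (by positivity), div_eq_mul_inv, mul_comm (∫⁻ _, _ ∂_),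
    ← mul_assoc]
  exact mul_le_mul_right (lintegral_sphere_le_omegaMod hΩhom hr y) _

end HomogeneousKernel

theorem stmt_12_general {n : ℕ} (α : ℝ)
    (Ω : EuclideanSpace ℝ (Fin n) → ℝ)
    (hΩhom : ∀ s : ℝ, 0 < s → ∀ x : EuclideanSpace ℝ (Fin n), Ω (s • x) = Ω x) :
    ∀ ρ : ℝ, 0 < ρ → ∀ y : EuclideanSpace ℝ (Fin n),
      (∫⁻ x in {x : EuclideanSpace ℝ (Fin n) | ρ < ‖x‖},
          ENNReal.ofReal |Ω (x - y) - Ω x| / ENNReal.ofReal (‖x‖ ^ ((n:ℝ) - α)))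
        ≤ ENNReal.ofReal (‖y‖ ^ α) *
            ∫⁻ s in Set.Ioo (0:ℝ) (‖y‖ / ρ), omegaMod n Ω s / ENNReal.ofReal (s ^ (1 + α)) := by
  intro ρ hρ y
  rcases eq_or_ne y 0 with rfl | hy
  · simp
  rcases Nat.eq_zero_or_pos n with rfl | hn
  · have hempty : {x : EuclideanSpace ℝ (Fin 0) | ρ < ‖x‖} = ∅ := by
      ext x
      simp [Subsingleton.elim x 0, hρ.le]
    simp [hempty]
  have : Nontrivial (EuclideanSpace ℝ (Fin n)) :=
    Module.nontrivial_of_finrank_pos (by rwa [finrank_euclideanSpace_fin])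
  refine (setLIntegral_norm_gt_le volume hρ.le _).trans ?_
  rw [finrank_euclideanSpace_fin]
  refine (setLIntegral_mono' measurableSet_Ioi fun r hr =>
    ofReal_pow_mul_lintegral_sphere_le hn hΩhom α (hρ.trans hr) y).trans_eq ?_
  exact (ofReal_rpow_mul_lintegral_Ioo_eq (norm_pos_iff.2 hy) hρ α _).symm

/-- For `Ω` homogeneous of degree `0` and `α ∈ [0,n)`, for every `ρ > 0` and `y`:
`∫_{|x|>ρ} |Ω(x-y) - Ω(x)|/|x|^{n-α} dx ≤ |y|^α ∫₀^{|y|/ρ} ω(s)/s^{1+α} ds`. -/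
theorem stmt_12 {n : ℕ} (α : ℝ) (hα0 : 0 ≤ α) (hαn : α < n)
    (Ω : EuclideanSpace ℝ (Fin n) → ℝ) (hΩm : Measurable Ω)
    (hΩhom : ∀ s : ℝ, 0 < s → ∀ x : EuclideanSpace ℝ (Fin n), Ω (s • x) = Ω x) :
    ∀ ρ : ℝ, 0 < ρ → ∀ y : EuclideanSpace ℝ (Fin n),
      (∫⁻ x in {x : EuclideanSpace ℝ (Fin n) | ρ < ‖x‖},
          ENNReal.ofReal |Ω (x - y) - Ω x| / ENNReal.ofReal (‖x‖ ^ ((n:ℝ) - α)))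
        ≤ ENNReal.ofReal (‖y‖ ^ α) *
            ∫⁻ s in Set.Ioo (0:ℝ) (‖y‖ / ρ), omegaMod n Ω s / ENNReal.ofReal (s ^ (1 + α)) :=
  stmt_12_general α Ω hΩhom
end

section
/- Let Ω be homogeneous of degree 0 satisfying the L¹_α-Dini condition (∫₀¹ ω(t)/t^{1+α} dt < ∞, with ω the L¹ integral continuity modulus). Let V be a probability measure supported in B(0,r_t). Then for every fixed ρ > 0 and λ > 0, |{x ∈ B(0,ρ)^c : |x|^{α−n} ∫_{B(0,r_t)} |Ω(x−y) − Ω(x)| dV(y) > λ}| ≤ (1/λ) sup_{y ∈ B(0,r_t)} |y|^α ∫₀^{|y|/ρ} ω(s)/s^{1+α} ds, and in particular this measure tends to 0 as r_t → 0⁺. -/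
open MeasureTheory Metric Set Filter
open scoped ENNReal Topology

/-! In polar coordinates `x = r ξ`, homogeneity turns `Ω(rξ - y) - Ω(rξ)` into
`Ω(ξ - y/r) - Ω(ξ)`, whose integral over the sphere is at most `ω(|y|/r)`. Hence
`∫_{|x|>ρ} |x|^{α-n} |Ω(x-y) - Ω(x)| dx ≤ ∫_ρ^∞ r^{α-1} ω(|y|/r) dr`
`= |y|^α ∫_0^{|y|/ρ} ω(s) s^{-1-α} ds` by the substitution `s = |y|/r`. Integrating in `y` against `V` (Tonelli) and Markov's inequality
give the bound. For `V` supported in `B(0,t)` with `t ≤ 1` the bound is at most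
`λ⁻¹ ∫_0^{t/ρ} ω(s) s^{-1-α} ds`, which tends to `0` with `t` by the Dini condition. -/

theorem lintegral_eq_lintegral_Ioi_lintegral_toSphere {E : Type*} [NormedAddCommGroup E]
    [NormedSpace ℝ E] [FiniteDimensional ℝ E] [MeasurableSpace E] [BorelSpace E] [Nontrivial E]
    (μ : Measure E) [μ.IsAddHaarMeasure] {g : E → ℝ≥0∞} (hg : Measurable g) :
    ∫⁻ x, g x ∂μ = ∫⁻ r in Ioi (0 : ℝ), ENNReal.ofReal (r ^ (Module.finrank ℝ E - 1)) *
      ∫⁻ ξ, g (r • (ξ : E)) ∂μ.toSphere := by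
  set G : sphere (0 : E) 1 × Ioi (0 : ℝ) → ℝ≥0∞ := fun p => g ((p.2 : ℝ) • (p.1 : E))
  have hG : Measurable G := hg.comp (by fun_prop)
  calc ∫⁻ x, g x ∂μ
      = ∫⁻ x : ({0}ᶜ : Set E), g x ∂(μ.comap Subtype.val) := by
        rw [lintegral_subtype_comap (measurableSet_singleton 0).compl, restrict_compl_singleton]
    _ = ∫⁻ x : ({0}ᶜ : Set E), G (homeomorphUnitSphereProd E x) ∂(μ.comap Subtype.val) := by
        refine lintegral_congr fun x => ?_
        simp [G, smul_inv_smul₀ (norm_ne_zero_iff.2 x.2)]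
    _ = ∫⁻ p, G p ∂(μ.toSphere.prod (Measure.volumeIoiPow (Module.finrank ℝ E - 1))) :=
        (μ.measurePreserving_homeomorphUnitSphereProd).lintegral_comp hG
    _ = ∫⁻ r, ∫⁻ ξ, G (ξ, r) ∂μ.toSphere ∂(Measure.volumeIoiPow (Module.finrank ℝ E - 1)) :=
        lintegral_prod_symm' G hG
    _ = _ := by
        rw [Measure.volumeIoiPow, lintegral_withDensity_eq_lintegral_mul _ (by fun_prop)
          hG.lintegral_prod_left', ← lintegral_subtype_comap measurableSet_Ioi]
        rfl

theorem image_const_div_Ioo_zero {a ρ : ℝ} (ha : 0 < a) (hρ : 0 < ρ) :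
    (a / ·) '' Ioo 0 (a / ρ) = Ioi ρ := by
  ext r
  constructor
  · rintro ⟨s, ⟨hs0, hs⟩, rfl⟩
    exact (lt_div_comm₀ hs0 hρ).1 hs
  · intro hr
    have hr0 : 0 < r := hρ.trans hr
    exact ⟨a / r, ⟨by positivity, div_lt_div_of_pos_left ha hρ hr⟩, div_div_cancel₀ ha.ne'⟩

theorem lintegral_Ioi_rpow_mul_comp_const_div (α : ℝ) {a ρ : ℝ} (ha : 0 < a) (hρ : 0 < ρ)
    (g : ℝ → ℝ≥0∞) :
    ∫⁻ r in Ioi ρ, ENNReal.ofReal (r ^ (α - 1)) * g (a / r) =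
      ENNReal.ofReal (a ^ α) * ∫⁻ s in Ioo 0 (a / ρ), g s / ENNReal.ofReal (s ^ (1 + α)) := by
  have hderiv : ∀ s ∈ Ioo 0 (a / ρ), HasDerivWithinAt (a / ·) (-(a / s ^ 2)) (Ioo 0 (a / ρ)) s :=
    fun s hs => by
      simpa [div_eq_mul_inv] using ((hasDerivAt_inv hs.1.ne').const_mul a).hasDerivWithinAt
  have hinj : InjOn (a / ·) (Ioo 0 (a / ρ)) := fun s _ t _ hst => by
    simpa [div_eq_mul_inv, ha.ne'] using hst
  rw [← image_const_div_Ioo_zero ha hρ, lintegral_image_eq_lintegral_abs_deriv_mul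
    measurableSet_Ioo hderiv hinj, ← lintegral_const_mul' _ _ ENNReal.ofReal_ne_top]
  refine setLIntegral_congr_fun measurableSet_Ioo fun s hs => ?_
  have hs0 : 0 < s := hs.1
  have key : |-(a / s ^ 2)| * (a / s) ^ (α - 1) = a ^ α / s ^ (1 + α) := by
    rw [abs_neg, abs_of_pos (by positivity), Real.div_rpow ha.le hs0.le,
      Real.rpow_sub_one ha.ne', Real.rpow_add hs0, Real.rpow_sub_one hs0.ne', Real.rpow_one]
    field_simp
  rw [div_div_cancel₀ ha.ne', ← mul_assoc, ← ENNReal.ofReal_mul (abs_nonneg _), key,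
    ENNReal.ofReal_div_of_pos (by positivity), div_eq_mul_inv, div_eq_mul_inv]
  ring

section Homogeneous

variable {n : ℕ} {Ω : EuclideanSpace ℝ (Fin n) → ℝ}

local notation "ℝⁿ" => EuclideanSpace ℝ (Fin n)

theorem lintegral_toSphere_smul_sub_le_omegaMod
    (hΩhom : ∀ s : ℝ, 0 < s → ∀ x : ℝⁿ, Ω (s • x) = Ω x)
    {r : ℝ} (hr : 0 < r) (y : ℝⁿ) :
    ∫⁻ ξ : sphere (0 : ℝⁿ) 1,
        ENNReal.ofReal |Ω (r • (ξ : ℝⁿ) - y) - Ω (r • (ξ : ℝⁿ))|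
        ∂(volume : Measure ℝⁿ).toSphere ≤
      omegaMod n Ω (‖y‖ / r) := by
  have hscale : ∀ ξ : ℝⁿ, r • ξ - y = r • (ξ + -(r⁻¹ • y)) := fun ξ => by
    rw [smul_add, smul_neg, smul_inv_smul₀ hr.ne', sub_eq_add_neg]
  simp only [hscale, hΩhom r hr]
  refine le_iSup₂_of_le (-(r⁻¹ • y)) (le_of_eq ?_) le_rfl
  rw [norm_neg, norm_smul, norm_inv, Real.norm_of_nonneg hr.le, inv_mul_eq_div]

theorem setLIntegral_rpow_norm_mul_sub_le (α : ℝ) (hΩm : Measurable Ω)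
    (hΩhom : ∀ s : ℝ, 0 < s → ∀ x : ℝⁿ, Ω (s • x) = Ω x)
    (y : ℝⁿ) {ρ : ℝ} (hρ : 0 < ρ) :
    ∫⁻ x in {x : ℝⁿ | ρ < ‖x‖},
        ENNReal.ofReal (‖x‖ ^ (α - n)) * ENNReal.ofReal |Ω (x - y) - Ω x| ≤
      ENNReal.ofReal (‖y‖ ^ α) *
        ∫⁻ s in Ioo 0 (‖y‖ / ρ), omegaMod n Ω s / ENNReal.ofReal (s ^ (1 + α)) := by
  rcases eq_or_ne y 0 with rfl | hy
  · simp
  have : Nontrivial ℝⁿ := ⟨⟨y, 0, hy⟩⟩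
  have hn : 0 < n := by
    simpa using Module.finrank_pos (R := ℝ) (M := ℝⁿ)
  have hS : MeasurableSet {x : ℝⁿ | ρ < ‖x‖} :=
    measurableSet_lt measurable_const measurable_norm
  set g := {x : ℝⁿ | ρ < ‖x‖}.indicator
    fun x => ENNReal.ofReal (‖x‖ ^ (α - n)) * ENNReal.ofReal |Ω (x - y) - Ω x|
  have hg : Measurable g := Measurable.indicator (by fun_prop) hS
  have hradial : ∀ r ∈ Ioi (0 : ℝ),
      ENNReal.ofReal (r ^ (n - 1)) * ∫⁻ ξ : sphere (0 : ℝⁿ) 1, g (r • (ξ : ℝⁿ)) ∂volume.toSphere ≤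
        (Ioi ρ).indicator (fun r => ENNReal.ofReal (r ^ (α - 1)) * omegaMod n Ω (‖y‖ / r)) r := by
    intro r (hr : 0 < r)
    have hnorm : ∀ ξ : sphere (0 : ℝⁿ) 1, ‖r • (ξ : ℝⁿ)‖ = r :=
      fun ξ => by simp [norm_smul, abs_of_pos hr]
    by_cases hρr : ρ < r
    · simp only [g, indicator, mem_ofPred_eq, mem_Ioi, hnorm, hρr, if_true]
      have hpow : r ^ (n - 1) * r ^ (α - n) = r ^ (α - 1) := by
        rw [← Real.rpow_natCast, Nat.cast_sub hn, ← Real.rpow_add hr, Nat.cast_one]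
        ring_nf
      rw [lintegral_const_mul' _ _ ENNReal.ofReal_ne_top, ← mul_assoc,
        ← ENNReal.ofReal_mul (by positivity), hpow]
      gcongr
      exact lintegral_toSphere_smul_sub_le_omegaMod hΩhom hr y
    · simp [g, indicator, hnorm, hρr]
  calc _ = ∫⁻ x, g x := (lintegral_indicator hS _).symm
    _ = ∫⁻ r in Ioi 0, ENNReal.ofReal (r ^ (n - 1)) *
          ∫⁻ ξ : sphere (0 : ℝⁿ) 1, g (r • (ξ : ℝⁿ)) ∂volume.toSphere := by
        rw [lintegral_eq_lintegral_Ioi_lintegral_toSphere volume hg, finrank_euclideanSpace_fin]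
    _ ≤ ∫⁻ r in Ioi 0,
          (Ioi ρ).indicator (fun r => ENNReal.ofReal (r ^ (α - 1)) * omegaMod n Ω (‖y‖ / r)) r :=
        setLIntegral_mono' measurableSet_Ioi hradial
    _ = ∫⁻ r in Ioi ρ, ENNReal.ofReal (r ^ (α - 1)) * omegaMod n Ω (‖y‖ / r) := by
        rw [lintegral_indicator measurableSet_Ioi, Measure.restrict_restrict measurableSet_Ioi,
          inter_eq_left.2 (Ioi_subset_Ioi hρ.le)]
    _ = _ := lintegral_Ioi_rpow_mul_comp_const_div α (norm_pos_iff.2 hy) hρ _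

theorem volume_setOf_lt_rpow_norm_mul_lintegral_le (α : ℝ) (hΩm : Measurable Ω)
    (hΩhom : ∀ s : ℝ, 0 < s → ∀ x : ℝⁿ, Ω (s • x) = Ω x)
    {rt : ℝ} {V : Measure ℝⁿ} [IsProbabilityMeasure V] (hV : V (closedBall 0 rt)ᶜ = 0)
    {ρ : ℝ} (hρ : 0 < ρ) {l : ℝ} (hl : 0 < l) :
    volume {x : ℝⁿ | ρ < ‖x‖ ∧
        ENNReal.ofReal l <
          ENNReal.ofReal (‖x‖ ^ (α - n)) * ∫⁻ y, ENNReal.ofReal |Ω (x - y) - Ω x| ∂V} ≤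
      (ENNReal.ofReal l)⁻¹ *
        ⨆ y ∈ closedBall (0 : ℝⁿ) rt, ENNReal.ofReal (‖y‖ ^ α) *
          ∫⁻ s in Ioo 0 (‖y‖ / ρ), omegaMod n Ω s / ENNReal.ofReal (s ^ (1 + α)) := by
  set S := {x : ℝⁿ | ρ < ‖x‖}
  have hS : MeasurableSet S := measurableSet_lt measurable_const measurable_norm
  have hl0 : ENNReal.ofReal l ≠ 0 := (ENNReal.ofReal_pos.2 hl).ne'
  set B := ⨆ y ∈ closedBall (0 : ℝⁿ) rt, ENNReal.ofReal (‖y‖ ^ α) *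
    ∫⁻ s in Ioo 0 (‖y‖ / ρ), omegaMod n Ω s / ENNReal.ofReal (s ^ (1 + α))
  have hswap : ∫⁻ x in S, ENNReal.ofReal (‖x‖ ^ (α - n)) *
      ∫⁻ y, ENNReal.ofReal |Ω (x - y) - Ω x| ∂V =
        ∫⁻ y, (∫⁻ x in S, ENNReal.ofReal (‖x‖ ^ (α - n)) *
          ENNReal.ofReal |Ω (x - y) - Ω x|) ∂V := by
    simp_rw [← lintegral_const_mul' _ _ ENNReal.ofReal_ne_top]
    exact lintegral_lintegral_swap (by fun_prop)
  calc _ ≤ volume.restrict S {x | ENNReal.ofReal l ≤ ENNReal.ofReal (‖x‖ ^ (α - n)) *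
          ∫⁻ y, ENNReal.ofReal |Ω (x - y) - Ω x| ∂V} := by
        rw [Measure.restrict_apply' hS]
        exact measure_mono fun x hx => ⟨hx.2.le, hx.1⟩
    _ ≤ (∫⁻ x in S, ENNReal.ofReal (‖x‖ ^ (α - n)) *
          ∫⁻ y, ENNReal.ofReal |Ω (x - y) - Ω x| ∂V) / ENNReal.ofReal l :=
        meas_ge_le_lintegral_div (by fun_prop) hl0 ENNReal.ofReal_ne_top
    _ = (ENNReal.ofReal l)⁻¹ *
          ∫⁻ y, (∫⁻ x in S, ENNReal.ofReal (‖x‖ ^ (α - n)) *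
          ENNReal.ofReal |Ω (x - y) - Ω x|) ∂V := by
        rw [ENNReal.div_eq_inv_mul, hswap]
    _ ≤ _ := by
        gcongr
        calc _ ≤ ∫⁻ _, B ∂V := by
              refine lintegral_mono_ae ?_
              filter_upwards [mem_ae_iff.2 hV] with y hy
              exact (setLIntegral_rpow_norm_mul_sub_le α hΩm hΩhom y hρ).trans
                (le_iSup₂_of_le y hy le_rfl)
          _ = _ := by simp

end Homogeneous

theorem tendsto_setLIntegral_Ioo_zero_nhdsGT {h : ℝ → ℝ≥0∞} {b : ℝ} (hb : 0 < b)
    (hfin : ∫⁻ s in Ioo 0 b, h s ≠ ∞) :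
    Tendsto (fun c => ∫⁻ s in Ioo 0 c, h s) (𝓝[>] 0) (𝓝 0) := by
  have hempty : ⋂ c > (0 : ℝ), Ioo 0 c = ∅ := eq_empty_of_forall_notMem fun x hx => by
    have hx0 : 0 < x := (mem_iInter₂.1 hx 1 one_pos).1
    exact (mem_iInter₂.1 hx x hx0).2.false
  have := tendsto_measure_biInter_gt (μ := volume.withDensity h) (s := fun c => Ioo 0 c)
    (fun _ _ => measurableSet_Ioo.nullMeasurableSet) (fun _ _ _ hij => Ioo_subset_Ioo_right hij)
    ⟨b, hb, by rwa [withDensity_apply _ measurableSet_Ioo]⟩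
  simpa [Function.comp_def, withDensity_apply _ measurableSet_Ioo, hempty] using this

theorem iSup_closedBall_rpow_norm_mul_setLIntegral_le {E : Type*} [SeminormedAddCommGroup E]
    {α : ℝ} (hα : 0 ≤ α) {t ρ : ℝ} (ht : t ≤ 1) (hρ : 0 < ρ) (h : ℝ → ℝ≥0∞) :
    ⨆ y ∈ closedBall (0 : E) t, ENNReal.ofReal (‖y‖ ^ α) * ∫⁻ s in Ioo 0 (‖y‖ / ρ), h s ≤
      ∫⁻ s in Ioo 0 (t / ρ), h s := by
  refine iSup₂_le fun y hy => ?_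
  have hyt : ‖y‖ ≤ t := mem_closedBall_zero_iff.1 hy
  calc _ ≤ 1 * ∫⁻ s in Ioo 0 (t / ρ), h s := by
        gcongr
        exact ENNReal.ofReal_le_one.2 (Real.rpow_le_one (norm_nonneg y) (hyt.trans ht) hα)
    _ = _ := one_mul _

theorem stmt_13_general {n : ℕ} (α : ℝ) (hα0 : 0 ≤ α)
    (Ω : EuclideanSpace ℝ (Fin n) → ℝ) (hΩm : Measurable Ω)
    (hΩhom : ∀ s : ℝ, 0 < s → ∀ x : EuclideanSpace ℝ (Fin n), Ω (s • x) = Ω x)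
    (hDini : (∫⁻ s in Set.Ioo (0:ℝ) 1, omegaMod n Ω s / ENNReal.ofReal (s ^ (1 + α))) < ⊤) :
    (∀ rt : ℝ, 0 < rt → ∀ V : Measure (EuclideanSpace ℝ (Fin n)),
      IsProbabilityMeasure V → V (closedBall (0:EuclideanSpace ℝ (Fin n)) rt)ᶜ = 0 →
      ∀ ρ : ℝ, 0 < ρ → ∀ l : ℝ, 0 < l →
        volume {x : EuclideanSpace ℝ (Fin n) | ρ < ‖x‖ ∧
            ENNReal.ofReal l <
              ENNReal.ofReal (‖x‖ ^ (α - (n:ℝ))) * ∫⁻ y, ENNReal.ofReal |Ω (x - y) - Ω x| ∂V}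
          ≤ (ENNReal.ofReal l)⁻¹ *
              ⨆ (y : EuclideanSpace ℝ (Fin n)) (_ : y ∈ closedBall (0:EuclideanSpace ℝ (Fin n)) rt),
                ENNReal.ofReal (‖y‖ ^ α) *
                  ∫⁻ s in Set.Ioo (0:ℝ) (‖y‖ / ρ), omegaMod n Ω s / ENNReal.ofReal (s ^ (1 + α))) ∧
    (∀ W : ℝ → Measure (EuclideanSpace ℝ (Fin n)),
      (∀ t : ℝ, 0 < t → IsProbabilityMeasure (W t) ∧
        W t (closedBall (0:EuclideanSpace ℝ (Fin n)) t)ᶜ = 0) →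
      ∀ ρ : ℝ, 0 < ρ → ∀ l : ℝ, 0 < l →
        Tendsto (fun t : ℝ =>
            volume {x : EuclideanSpace ℝ (Fin n) | ρ < ‖x‖ ∧
              ENNReal.ofReal l <
                ENNReal.ofReal (‖x‖ ^ (α - (n:ℝ))) *
                  ∫⁻ y, ENNReal.ofReal |Ω (x - y) - Ω x| ∂(W t)})
          (𝓝[>] (0:ℝ)) (𝓝 0)) := by
  refine ⟨fun rt _ V _ hV ρ hρ l hl =>
    volume_setOf_lt_rpow_norm_mul_lintegral_le α hΩm hΩhom hV hρ hl, fun W hW ρ hρ l hl => ?_⟩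
  have hdiv : Tendsto (· / ρ) (𝓝[>] (0 : ℝ)) (𝓝[>] 0) :=
    tendsto_nhdsWithin_of_tendsto_nhds_of_eventually_within _
      (((continuous_id.div_const ρ).tendsto' 0 0 (zero_div ρ)).mono_left nhdsWithin_le_nhds)
      (eventually_mem_nhdsWithin.mono fun t ht => div_pos ht hρ)
  have hbound := ENNReal.Tendsto.const_mul
    ((tendsto_setLIntegral_Ioo_zero_nhdsGT one_pos hDini.ne).comp hdiv)
    (Or.inr (ENNReal.inv_ne_top.2 (ENNReal.ofReal_pos.2 hl).ne'))
  rw [mul_zero] at hbound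
  refine tendsto_of_tendsto_of_tendsto_of_le_of_le' tendsto_const_nhds hbound
    (Eventually.of_forall fun _ => zero_le) ?_
  filter_upwards [Ioc_mem_nhdsGT one_pos] with t ht
  obtain ⟨_, hWt⟩ := hW t ht.1
  exact (volume_setOf_lt_rpow_norm_mul_lintegral_le α hΩm hΩhom hWt hρ hl).trans
    (by gcongr; exact iSup_closedBall_rpow_norm_mul_setLIntegral_le hα0 ht.2 hρ _)

/-- Chebyshev estimate for a probability measure `V` supported in `B(0, r_t)`, under the
`L¹_α`-Dini condition: the measure of the set where
`|x|^{α-n} ∫ |Ω(x-y) - Ω(x)| dV(y) > λ` on `{|x| > ρ}` is at most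
`(1/λ) sup_{y ∈ B(0,r_t)} |y|^α ∫₀^{|y|/ρ} ω(s)/s^{1+α} ds`, and for any family of probability
measures supported in `B(0,t)` this measure tends to `0` as `t → 0⁺`. -/
theorem stmt_13 {n : ℕ} (α : ℝ) (hα0 : 0 ≤ α) (hαn : α < n)
    (Ω : EuclideanSpace ℝ (Fin n) → ℝ) (hΩm : Measurable Ω)
    (hΩhom : ∀ s : ℝ, 0 < s → ∀ x : EuclideanSpace ℝ (Fin n), Ω (s • x) = Ω x)
    (hDini : (∫⁻ s in Set.Ioo (0:ℝ) 1, omegaMod n Ω s / ENNReal.ofReal (s ^ (1 + α))) < ⊤) :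
    (∀ rt : ℝ, 0 < rt → ∀ V : Measure (EuclideanSpace ℝ (Fin n)),
      IsProbabilityMeasure V → V (closedBall (0:EuclideanSpace ℝ (Fin n)) rt)ᶜ = 0 →
      ∀ ρ : ℝ, 0 < ρ → ∀ l : ℝ, 0 < l →
        volume {x : EuclideanSpace ℝ (Fin n) | ρ < ‖x‖ ∧
            ENNReal.ofReal l <
              ENNReal.ofReal (‖x‖ ^ (α - (n:ℝ))) * ∫⁻ y, ENNReal.ofReal |Ω (x - y) - Ω x| ∂V}
          ≤ (ENNReal.ofReal l)⁻¹ *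
              ⨆ (y : EuclideanSpace ℝ (Fin n)) (_ : y ∈ closedBall (0:EuclideanSpace ℝ (Fin n)) rt),
                ENNReal.ofReal (‖y‖ ^ α) *
                  ∫⁻ s in Set.Ioo (0:ℝ) (‖y‖ / ρ), omegaMod n Ω s / ENNReal.ofReal (s ^ (1 + α))) ∧
    (∀ W : ℝ → Measure (EuclideanSpace ℝ (Fin n)),
      (∀ t : ℝ, 0 < t → IsProbabilityMeasure (W t) ∧
        W t (closedBall (0:EuclideanSpace ℝ (Fin n)) t)ᶜ = 0) →
      ∀ ρ : ℝ, 0 < ρ → ∀ l : ℝ, 0 < l →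
        Tendsto (fun t : ℝ =>
            volume {x : EuclideanSpace ℝ (Fin n) | ρ < ‖x‖ ∧
              ENNReal.ofReal l <
                ENNReal.ofReal (‖x‖ ^ (α - (n:ℝ))) *
                  ∫⁻ y, ENNReal.ofReal |Ω (x - y) - Ω x| ∂(W t)})
          (𝓝[>] (0:ℝ)) (𝓝 0)) :=
  stmt_13_general α hα0 Ω hΩm hΩhom hDini
end

section
/- Let 1 ≤ p < ∞ and 1 < q, r < ∞ with 1 + 1/q = 1/p + 1/r. If Ω is homogeneous of degree 0 with Ω ∈ L^{n/(n−α)}(S^{n−1}) for α ∈ (0,n), then the fractional integral T_Ω^α f(x) = ∫ Ω(x−y)|x−y|^{α−n} f(y) dy is bounded from L¹(ℝⁿ) to L^{n/(n−α),∞}(ℝⁿ), with norm ≲ ‖Ω‖_{L^{n/(n−α)}(S^{n−1})}. -/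
open MeasureTheory Metric Set Module
open scoped ENNReal

/-! Split the kernel `k = |Ω(x)| |x|^(α-n)` at a height `M`. The part of `k` below `M`
contributes at most `M ‖f‖₁` to `|T f|` pointwise, while the part above `M` is integrable: by polar
coordinates and homogeneity its integral is `M^(1-s)/α · ∫_{S^{n-1}} |Ω|^s`, with `s = n/(n-α)`.
Taking `M ‖f‖₁ = λ/2` and applying Markov's inequality to the convolution of `|f|` with the part
above `M` gives `|{|T f| > λ}| ≤ (2‖f‖₁/λ)^s / α · ∫_{S^{n-1}} |Ω|^s`. -/

namespace MeasureTheory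

section LConvolution

variable {G : Type*} [MeasurableSpace G] [AddGroup G] {μ : Measure G} {f g : G → ℝ≥0∞}

theorem lconvolution_le_mul_lintegral_add_lconvolution_indicator (hf : AEMeasurable f μ)
    (M : ℝ≥0∞) (x : G) :
    (f ⋆ₗ[μ] g) x ≤ M * (∫⁻ y, f y ∂μ) + (f ⋆ₗ[μ] {z | M < g z}.indicator g) x := by
  have hg_le (z : G) : g z ≤ M + {z | M < g z}.indicator g z := by
    by_cases hz : M < g z
    · simp [hz]
    · simpa [hz] using not_lt.1 hz
  calc (f ⋆ₗ[μ] g) x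
      ≤ ∫⁻ y, M * f y + f y * {z | M < g z}.indicator g (-y + x) ∂μ := by
        refine lintegral_mono fun y => ?_
        grw [hg_le (-y + x), mul_add, mul_comm]
    _ = _ := by
        rw [lintegral_add_left' (hf.const_mul M), lintegral_const_mul'' M hf, lconvolution_def]

variable [MeasurableAdd₂ G] [MeasurableNeg G] [μ.IsAddLeftInvariant] [SFinite μ]

theorem lintegral_lconvolution (hf : AEMeasurable f μ) (hg : AEMeasurable g μ) :
    ∫⁻ x, (f ⋆ₗ[μ] g) x ∂μ = (∫⁻ x, f x ∂μ) * ∫⁻ x, g x ∂μ := by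
  simp only [lconvolution_def]
  rw [lintegral_lintegral_swap (by fun_prop), ← lintegral_mul_const'' _ hf]
  refine lintegral_congr fun y => ?_
  rw [lintegral_const_mul'' (f := fun x => g (-y + x)) _
    (hg.comp_quasiMeasurePreserving (measurePreserving_add_left μ (-y)).quasiMeasurePreserving),
    lintegral_add_left_eq_self g (-y)]

theorem mul_meas_lt_lconvolution_le (hf : AEMeasurable f μ) (hg : Measurable g) (M t : ℝ≥0∞) :
    t * μ {x | M * (∫⁻ y, f y ∂μ) + t < (f ⋆ₗ[μ] g) x}
      ≤ (∫⁻ y, f y ∂μ) * ∫⁻ z, {z | M < g z}.indicator g z ∂μ := by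
  have hgM : Measurable ({z | M < g z}.indicator g) :=
    hg.indicator (measurableSet_lt measurable_const hg)
  calc t * μ {x | M * (∫⁻ y, f y ∂μ) + t < (f ⋆ₗ[μ] g) x}
      ≤ t * μ {x | t ≤ (f ⋆ₗ[μ] {z | M < g z}.indicator g) x} := by
        refine mul_le_mul_right (measure_mono fun x hx => ?_) t
        exact (lt_of_add_lt_add_left
          (hx.trans_le (lconvolution_le_mul_lintegral_add_lconvolution_indicator hf M x))).le
    _ ≤ ∫⁻ x, (f ⋆ₗ[μ] {z | M < g z}.indicator g) x ∂μ :=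
        mul_meas_ge_le_lintegral₀ (aemeasurable_lconvolution hf hgM.aemeasurable) t
    _ = _ := lintegral_lconvolution hf hgM.aemeasurable

end LConvolution

theorem enorm_integral_mul_le_lconvolution {G : Type*} [MeasurableSpace G] [AddCommGroup G]
    {μ : Measure G} (K f : G → ℝ) (x : G) :
    ‖∫ y, K (x - y) * f y ∂μ‖ₑ ≤ ((fun y => ‖f y‖ₑ) ⋆ₗ[μ] fun z => ‖K z‖ₑ) x := by
  refine (enorm_integral_le_lintegral_enorm _).trans_eq (lintegral_congr fun y => ?_)
  rw [enorm_mul, mul_comm, neg_add_eq_sub]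

section Polar

variable {E : Type*} [NormedAddCommGroup E] [NormedSpace ℝ E] [FiniteDimensional ℝ E]
  [MeasurableSpace E] [BorelSpace E] [Nontrivial E] (μ : Measure E) [μ.IsAddHaarMeasure]

theorem lintegral_eq_lintegral_toSphere_lintegral_Ioi {F : E → ℝ≥0∞} (hF : Measurable F) :
    ∫⁻ x, F x ∂μ = ∫⁻ θ : sphere (0 : E) 1, (∫⁻ r in Ioi (0 : ℝ),
      ENNReal.ofReal (r ^ (finrank ℝ E - 1)) * F (r • (θ : E))) ∂μ.toSphere := by
  have hFpolar : Measurable fun p : sphere (0 : E) 1 × Ioi (0 : ℝ) => F (p.2.1 • p.1.1) := by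
    fun_prop
  calc ∫⁻ x, F x ∂μ
      = ∫⁻ x : ({0}ᶜ : Set E), F x ∂μ.comap Subtype.val := by
        rw [lintegral_subtype_comap (measurableSet_singleton 0).compl, restrict_compl_singleton]
    _ = ∫⁻ p, F (p.2.1 • p.1.1)
          ∂μ.toSphere.prod (Measure.volumeIoiPow (finrank ℝ E - 1)) := by
        rw [← (μ.measurePreserving_homeomorphUnitSphereProd).lintegral_comp_emb
          (Homeomorph.measurableEmbedding _)]
        refine lintegral_congr fun x => ?_
        simp [smul_smul, mul_inv_cancel₀ (norm_ne_zero_iff.2 x.2)]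
    _ = _ := by
        rw [lintegral_prod _ hFpolar.aemeasurable]
        refine lintegral_congr fun θ => ?_
        rw [Measure.volumeIoiPow,
          lintegral_withDensity_eq_lintegral_mul _ (by fun_prop) (by fun_prop),
          ← lintegral_subtype_comap measurableSet_Ioi]
        rfl

end Polar

theorem lintegral_Ioi_indicator_lt_mul_rpow {α d c M : ℝ} (hα : 0 < α) (hαd : α < d)
    (hc : 0 ≤ c) (hM : 0 < M) :
    ∫⁻ r in Ioi (0 : ℝ), {r | M < c * r ^ (α - d)}.indicator
        (fun r => ENNReal.ofReal (c * r ^ (α - 1))) r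
      = ENNReal.ofReal (M ^ (1 - d / (d - α)) / α * c ^ (d / (d - α))) := by
  have hdα : 0 < d - α := by linarith
  set R := (c / M) ^ (d - α)⁻¹
  have hR : 0 ≤ R := by positivity
  have hlevel : Ioi 0 ∩ {r | M < c * r ^ (α - d)} = Ioo 0 R := by
    ext r
    simp only [mem_inter_iff, mem_Ioi, mem_Ioo, and_congr_right_iff, mem_ofPred_eq]
    intro hr
    rw [Real.lt_rpow_inv_iff_of_pos hr.le (by positivity) hdα, lt_div_iff₀ hM,
      show α - d = -(d - α) by ring, Real.rpow_neg hr.le, ← div_eq_mul_inv,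
      lt_div_iff₀ (by positivity), mul_comm]
  have hint : ∫ r in Ioo 0 R, c * r ^ (α - 1) = c * (R ^ α / α) := by
    rw [← integral_Ioc_eq_integral_Ioo, ← intervalIntegral.integral_of_le hR,
      intervalIntegral.integral_const_mul, integral_rpow (Or.inl (by linarith)),
      sub_add_cancel, Real.zero_rpow hα.ne', sub_zero]
  have hpow : c * (R ^ α / α) = M ^ (1 - d / (d - α)) / α * c ^ (d / (d - α)) := by
    have hs : d / (d - α) = 1 + (d - α)⁻¹ * α := by field_simp; ring
    have hs' : 1 - d / (d - α) = -((d - α)⁻¹ * α) := by rw [hs]; ring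
    rw [hs', hs, Real.rpow_one_add' hc (by positivity), ← Real.rpow_mul (by positivity),
      Real.div_rpow hc hM.le, Real.rpow_neg hM.le]
    ring
  rw [lintegral_indicator (measurableSet_lt measurable_const (by fun_prop)),
    Measure.restrict_restrict (measurableSet_lt measurable_const (by fun_prop)), inter_comm, hlevel,
    ← ofReal_integral_eq_lintegral_ofReal, hint, hpow]
  · exact ((intervalIntegral.intervalIntegrable_rpow' (by linarith)).1.mono_set
      Ioo_subset_Ioc_self).const_mul c
  · filter_upwards [ae_restrict_mem measurableSet_Ioo] with r hr
    exact mul_nonneg hc (Real.rpow_nonneg hr.1.le _)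

section FractionalKernel

variable {E : Type*} [NormedAddCommGroup E] [NormedSpace ℝ E]

noncomputable def fractionalKernel (Ω : E → ℝ) (α : ℝ) (x : E) : ℝ :=
  Ω x * ‖x‖ ^ (α - finrank ℝ E)

variable {Ω : E → ℝ} {α : ℝ}

theorem enorm_fractionalKernel_smul (hΩhom : ∀ s : ℝ, 0 < s → ∀ x : E, Ω (s • x) = Ω x)
    {θ : E} (hθ : ‖θ‖ = 1) {r : ℝ} (hr : 0 < r) :
    ‖fractionalKernel Ω α (r • θ)‖ₑ = ENNReal.ofReal (|Ω θ| * r ^ (α - finrank ℝ E)) := by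
  rw [fractionalKernel, hΩhom r hr, norm_smul, hθ, Real.norm_of_nonneg hr.le, mul_one,
    Real.enorm_eq_ofReal_abs, abs_mul, abs_of_nonneg (Real.rpow_nonneg hr.le _)]

variable [FiniteDimensional ℝ E] [MeasurableSpace E] [BorelSpace E]
  (μ : Measure E) [μ.IsAddHaarMeasure]

theorem lintegral_indicator_enorm_fractionalKernel (hα0 : 0 < α) (hαd : α < finrank ℝ E)
    (hΩm : Measurable Ω) (hΩhom : ∀ s : ℝ, 0 < s → ∀ x : E, Ω (s • x) = Ω x) {M : ℝ} (hM : 0 < M) :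
    ∫⁻ x, {x | ENNReal.ofReal M < ‖fractionalKernel Ω α x‖ₑ}.indicator
        (fun x => ‖fractionalKernel Ω α x‖ₑ) x ∂μ
      = ENNReal.ofReal (M ^ (1 - finrank ℝ E / (finrank ℝ E - α)) / α) *
        ∫⁻ θ : sphere (0 : E) 1, ENNReal.ofReal (|Ω θ| ^ (finrank ℝ E / (finrank ℝ E - α)))
          ∂μ.toSphere := by
  have hd : 0 < finrank ℝ E := by exact_mod_cast hα0.trans hαd
  have : Nontrivial E := Module.nontrivial_of_finrank_pos hd
  have hK : Measurable fun x => ‖fractionalKernel Ω α x‖ₑ := by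
    unfold fractionalKernel; fun_prop
  rw [lintegral_eq_lintegral_toSphere_lintegral_Ioi μ
      (hK.indicator (measurableSet_lt measurable_const hK)),
    ← lintegral_const_mul' _ _ ENNReal.ofReal_ne_top]
  refine lintegral_congr fun θ => ?_
  have hθ : ‖(θ : E)‖ = 1 := mem_sphere_zero_iff_norm.1 θ.2
  rw [← ENNReal.ofReal_mul (by positivity), ← lintegral_Ioi_indicator_lt_mul_rpow hα0 hαd
    (abs_nonneg (Ω θ)) hM]
  refine setLIntegral_congr_fun measurableSet_Ioi fun r (hr : 0 < r) => ?_
  have hpow : r ^ (finrank ℝ E - 1) * (|Ω θ| * r ^ (α - finrank ℝ E)) = |Ω θ| * r ^ (α - 1) := by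
    rw [← Real.rpow_natCast, Nat.cast_pred hd, mul_left_comm, ← Real.rpow_add hr]
    ring_nf
  simp only [indicator_apply, mem_ofPred_eq, enorm_fractionalKernel_smul hΩhom hθ hr,
    ENNReal.ofReal_lt_ofReal_iff']
  split_ifs with h₁ h₂ h₂
  · rw [← ENNReal.ofReal_mul (by positivity), hpow]
  · exact absurd h₁.1 h₂
  · exact absurd ⟨h₂, hM.trans h₂⟩ h₁
  · rw [mul_zero]

theorem measure_lt_abs_integral_fractionalKernel_le (hα0 : 0 < α) (hαd : α < finrank ℝ E)
    (hΩm : Measurable Ω) (hΩhom : ∀ s : ℝ, 0 < s → ∀ x : E, Ω (s • x) = Ω x)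
    {f : E → ℝ} (hf : Integrable f μ) {l : ℝ} (hl : 0 < l) :
    μ {x | l < |∫ y, fractionalKernel Ω α (x - y) * f y ∂μ|}
      ≤ ENNReal.ofReal ((2 * (∫ y, |f y| ∂μ) / l) ^ (finrank ℝ E / (finrank ℝ E - α)) / α) *
        ∫⁻ θ : sphere (0 : E) 1, ENNReal.ofReal (|Ω θ| ^ (finrank ℝ E / (finrank ℝ E - α)))
          ∂μ.toSphere := by
  set d : ℝ := (finrank ℝ E : ℝ)
  set S := {x | l < |∫ y, fractionalKernel Ω α (x - y) * f y ∂μ|}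
  set I := ∫ y, |f y| ∂μ
  set F := fun y => ‖f y‖ₑ
  set k := fun z => ‖fractionalKernel Ω α z‖ₑ
  have hk : Measurable k := by unfold k fractionalKernel; fun_prop
  have hFI : ∫⁻ y, F y ∂μ = ENNReal.ofReal I := by
    simp only [F, I, ← Real.norm_eq_abs, ofReal_integral_norm_eq_lintegral_enorm hf]
  have hmarkov (M : ℝ) (t : ℝ≥0∞) (h : ENNReal.ofReal M * ENNReal.ofReal I + t = ENNReal.ofReal l) :
      t * μ S ≤ ENNReal.ofReal I * ∫⁻ z, {z | ENNReal.ofReal M < k z}.indicator k z ∂μ := by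
    refine (mul_le_mul_right (measure_mono fun x (hx : l < _) => ?_) t).trans
      (hFI ▸ mul_meas_lt_lconvolution_le hf.1.enorm hk _ t)
    rw [mem_ofPred_eq, h]
    calc ENNReal.ofReal l < ‖∫ y, fractionalKernel Ω α (x - y) * f y ∂μ‖ₑ := by
          rwa [Real.enorm_eq_ofReal_abs, ENNReal.ofReal_lt_ofReal_iff_of_nonneg hl.le]
      _ ≤ _ := enorm_integral_mul_le_lconvolution _ _ x
  obtain hI | hI := (show 0 ≤ I from integral_nonneg fun y => abs_nonneg (f y)).eq_or_lt
  · have hzero := hmarkov 1 (ENNReal.ofReal l) (by simp [← hI])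
    rw [← hI, ENNReal.ofReal_zero, zero_mul, nonpos_iff_eq_zero,
      mul_eq_zero, ENNReal.ofReal_eq_zero, or_iff_right hl.not_ge] at hzero
    simp [hzero]
  · set M := l / (2 * I)
    have hM : 0 < M := by positivity
    have hMI : M * I = l / 2 := by simp only [M]; field_simp
    have hsplit :
        ENNReal.ofReal M * ENNReal.ofReal I + ENNReal.ofReal (l / 2) = ENNReal.ofReal l := by
      rw [← ENNReal.ofReal_mul hM.le, hMI, ← ENNReal.ofReal_add (by positivity) (by positivity),
        add_halves]
    have hexp : I * (M ^ (1 - d / (d - α)) / α) = l / 2 * ((2 * I / l) ^ (d / (d - α)) / α) := by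
      rw [sub_eq_add_neg, Real.rpow_add hM, Real.rpow_one, Real.rpow_neg hM.le,
        ← Real.inv_rpow hM.le, ← hMI, show M⁻¹ = 2 * I / l by simp only [M, inv_div]]
      ring
    have := hmarkov M _ hsplit
    rw [lintegral_indicator_enorm_fractionalKernel μ hα0 hαd hΩm hΩhom hM, ← mul_assoc,
      ← ENNReal.ofReal_mul hI.le, hexp, ENNReal.ofReal_mul (by positivity), mul_assoc] at this
    exact (ENNReal.mul_le_mul_iff_right (by positivity) ENNReal.ofReal_ne_top).1 this

theorem ofReal_mul_measure_lt_abs_integral_fractionalKernel_rpow_le (hα0 : 0 < α)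
    (hαd : α < finrank ℝ E) (hΩm : Measurable Ω)
    (hΩhom : ∀ s : ℝ, 0 < s → ∀ x : E, Ω (s • x) = Ω x)
    {f : E → ℝ} (hf : Integrable f μ) {l : ℝ} (hl : 0 < l) :
    ENNReal.ofReal l * μ {x | l < |∫ y, fractionalKernel Ω α (x - y) * f y ∂μ|}
        ^ ((finrank ℝ E - α) / finrank ℝ E)
      ≤ ENNReal.ofReal (2 * α ^ (-((finrank ℝ E - α) / finrank ℝ E))) *
        (∫⁻ θ : sphere (0 : E) 1, ENNReal.ofReal (|Ω θ| ^ (finrank ℝ E / (finrank ℝ E - α)))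
          ∂μ.toSphere) ^ ((finrank ℝ E - α) / finrank ℝ E) *
        ENNReal.ofReal (∫ y, |f y| ∂μ) := by
  set d : ℝ := (finrank ℝ E : ℝ)
  set β := (d - α) / d
  set I := ∫ y, |f y| ∂μ
  have hd : 0 < d := hα0.trans hαd
  have hβ : 0 < β := div_pos (by linarith) hd
  have hI : 0 ≤ I := integral_nonneg fun y => abs_nonneg (f y)
  have hconst : l * ((2 * I / l) ^ (d / (d - α)) / α) ^ β = 2 * α ^ (-β) * I := by
    rw [Real.div_rpow (by positivity) hα0.le, ← Real.rpow_mul (by positivity),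
      show d / (d - α) * β = 1 by simp only [β]; field_simp [(by linarith : d - α ≠ 0)],
      Real.rpow_one, Real.rpow_neg hα0.le]
    field_simp
  calc ENNReal.ofReal l * μ {x | l < |∫ y, fractionalKernel Ω α (x - y) * f y ∂μ|} ^ β
      ≤ ENNReal.ofReal l * (ENNReal.ofReal ((2 * I / l) ^ (d / (d - α)) / α) *
          ∫⁻ θ : sphere (0 : E) 1, ENNReal.ofReal (|Ω θ| ^ (d / (d - α))) ∂μ.toSphere) ^ β := by
        gcongr
        exact measure_lt_abs_integral_fractionalKernel_le μ hα0 hαd hΩm hΩhom hf hl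
    _ = _ := by
        rw [ENNReal.mul_rpow_of_nonneg _ _ hβ.le,
          ENNReal.ofReal_rpow_of_nonneg (by positivity) hβ.le, ← mul_assoc,
          ← ENNReal.ofReal_mul hl.le, hconst, ENNReal.ofReal_mul (by positivity)]
        ring

end FractionalKernel

end MeasureTheory

theorem stmt_15_general {n : ℕ} (α : ℝ) (hα0 : 0 < α) (hαn : α < n)
    (Ω : EuclideanSpace ℝ (Fin n) → ℝ) (hΩm : Measurable Ω)
    (hΩhom : ∀ s : ℝ, 0 < s → ∀ x : EuclideanSpace ℝ (Fin n), Ω (s • x) = Ω x) :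
    ∃ C : ℝ≥0∞, C ≠ ⊤ ∧
      ∀ f : EuclideanSpace ℝ (Fin n) → ℝ, Integrable f →
        ∀ l : ℝ, 0 < l →
          ENNReal.ofReal l *
              (volume {x : EuclideanSpace ℝ (Fin n) |
                l < |∫ y, Ω (x - y) * ‖x - y‖ ^ (α - (n:ℝ)) * f y|}) ^ (((n:ℝ) - α) / n)
            ≤ C *
                ((∫⁻ x' : sphere (0:EuclideanSpace ℝ (Fin n)) 1,
                    ENNReal.ofReal (|Ω (x' : EuclideanSpace ℝ (Fin n))| ^ ((n:ℝ) / ((n:ℝ) - α)))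
                    ∂(volume : Measure (EuclideanSpace ℝ (Fin n))).toSphere)
                  ^ (((n:ℝ) - α) / n)) *
                ENNReal.ofReal (∫ y, |f y|) := by
  refine ⟨ENNReal.ofReal (2 * α ^ (-(((n:ℝ) - α) / n))), ENNReal.ofReal_ne_top, fun f hf l hl => ?_⟩
  have hαd : α < finrank ℝ (EuclideanSpace ℝ (Fin n)) := by rwa [finrank_euclideanSpace_fin]
  simpa only [fractionalKernel, finrank_euclideanSpace_fin] using
    ofReal_mul_measure_lt_abs_integral_fractionalKernel_rpow_le volume hα0 hαd hΩm hΩhom hf hl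

/-- Weak Young inequality application: if `Ω` is homogeneous of degree `0` with
`Ω ∈ L^{n/(n-α)}(S^{n-1})`, `α ∈ (0,n)`, then `T_Ω^α f(x) = ∫ Ω(x-y)|x-y|^{α-n} f(y) dy`
is bounded from `L¹(ℝⁿ)` to `L^{n/(n-α),∞}(ℝⁿ)` with norm `≲ ‖Ω‖_{L^{n/(n-α)}(S^{n-1})}`. -/
theorem stmt_15 {n : ℕ} (α : ℝ) (hα0 : 0 < α) (hαn : α < n)
    (p q r : ℝ) (hp : 1 ≤ p) (hq : 1 < q) (hr : 1 < r)
    (hpqr : 1 + 1 / q = 1 / p + 1 / r)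
    (Ω : EuclideanSpace ℝ (Fin n) → ℝ) (hΩm : Measurable Ω)
    (hΩhom : ∀ s : ℝ, 0 < s → ∀ x : EuclideanSpace ℝ (Fin n), Ω (s • x) = Ω x)
    (hΩLq : (∫⁻ x' : sphere (0:EuclideanSpace ℝ (Fin n)) 1,
        ENNReal.ofReal (|Ω (x' : EuclideanSpace ℝ (Fin n))| ^ ((n:ℝ) / ((n:ℝ) - α)))
        ∂(volume : Measure (EuclideanSpace ℝ (Fin n))).toSphere) < ⊤) :
    ∃ C : ℝ≥0∞, C ≠ ⊤ ∧
      ∀ f : EuclideanSpace ℝ (Fin n) → ℝ, Integrable f →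
        ∀ l : ℝ, 0 < l →
          ENNReal.ofReal l *
              (volume {x : EuclideanSpace ℝ (Fin n) |
                l < |∫ y, Ω (x - y) * ‖x - y‖ ^ (α - (n:ℝ)) * f y|}) ^ (((n:ℝ) - α) / n)
            ≤ C *
                ((∫⁻ x' : sphere (0:EuclideanSpace ℝ (Fin n)) 1,
                    ENNReal.ofReal (|Ω (x' : EuclideanSpace ℝ (Fin n))| ^ ((n:ℝ) / ((n:ℝ) - α)))
                    ∂(volume : Measure (EuclideanSpace ℝ (Fin n))).toSphere)
                  ^ (((n:ℝ) - α) / n)) *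
                ENNReal.ofReal (∫ y, |f y|) :=
  stmt_15_general α hα0 hαn Ω hΩm hΩhom
end

section
/- Let r ∈ (1,∞) and let g be a nonnegative radial function on ℝⁿ, decreasing in the radial direction. If the convolution map T_g(μ)(x) = ∫ g(x−y) dμ(y) satisfies ‖T_g μ‖_{L^{r,∞}} ≤ C μ(ℝⁿ) for all finite positive absolutely continuous measures μ, then g ∈ L^{r,∞}(ℝⁿ) with ‖g‖_{L^{r,∞}} ≤ C. -/
open MeasureTheory Metric Set Filter
open scoped ENNReal Topology

/-!
Averaging `g` against the uniform probability measure on a ball `B(0, s - R)` gives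
`T_g μ ≥ G(s)` on `B̄(0, R)` whenever `R < s`, since `‖x - y‖ < s` there and `G` is decreasing.
So the weak-type bound controls `l · |B̄(0, R)|^{1/r}` whenever `G(s) > l` for some `s > R`.
Up to a sphere, which is null, the superlevel set `{g > l}` is the increasing union of these
balls over rational `R`, and continuity of measure from below finishes the proof.
-/

section WeakType

variable {E : Type*} [MeasurableSpace E] [Sub E]

-- `‖T_g μ‖_{L^{r,∞}(ν)} ≤ C μ(E)` for finite `μ ≪ ν`, where `T_g μ (x) = ∫ g (x - y) dμ(y)`.
def ConvolutionWeakTypeBound (ν : Measure E) (g : E → ℝ) (r : ℝ) (C : ℝ≥0∞) : Prop :=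
  ∀ μ : Measure E, IsFiniteMeasure μ → μ ≪ ν → ∀ l : ℝ, 0 < l →
    ENNReal.ofReal l *
        (ν {x | ENNReal.ofReal l < ∫⁻ y, ENNReal.ofReal (g (x - y)) ∂μ}) ^ (1 / r)
      ≤ C * μ univ

open ProbabilityTheory in
theorem ConvolutionWeakTypeBound.ofReal_mul_measure_rpow_le {ν : Measure E} {g : E → ℝ}
    {r : ℝ} {C : ℝ≥0∞} (hT : ConvolutionWeakTypeBound ν g r C) (hr : 0 ≤ r) {l m : ℝ}
    (hl : 0 < l) (hlm : l < m) {K B : Set E} (hB : MeasurableSet B) (hB₀ : ν B ≠ 0)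
    (hB_top : ν B ≠ ∞) (hKB : ∀ x ∈ K, ∀ y ∈ B, m ≤ g (x - y)) :
    ENNReal.ofReal l * ν K ^ (1 / r) ≤ C := by
  have := cond_isProbabilityMeasure_of_finite hB₀ hB_top
  have hK : K ⊆ {x | ENNReal.ofReal l < ∫⁻ y, ENNReal.ofReal (g (x - y)) ∂ν[|B]} := by
    intro x hx
    calc ENNReal.ofReal l < ENNReal.ofReal m := ENNReal.ofReal_lt_ofReal_iff'.2 ⟨hlm, hl.trans hlm⟩
      _ = (ν B)⁻¹ * ∫⁻ _ in B, ENNReal.ofReal m ∂ν := by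
        rw [setLIntegral_const, mul_comm, mul_assoc, ENNReal.mul_inv_cancel hB₀ hB_top, mul_one]
      _ ≤ (ν B)⁻¹ * ∫⁻ y in B, ENNReal.ofReal (g (x - y)) ∂ν :=
        mul_le_mul_right
          (setLIntegral_mono' hB fun y hy ↦ ENNReal.ofReal_le_ofReal (hKB x hx y hy)) _
      _ = ∫⁻ y, ENNReal.ofReal (g (x - y)) ∂ν[|B] := by
        rw [ProbabilityTheory.cond, lintegral_smul_measure, smul_eq_mul]
  calc ENNReal.ofReal l * ν K ^ (1 / r)
      ≤ ENNReal.ofReal l *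
          (ν {x | ENNReal.ofReal l < ∫⁻ y, ENNReal.ofReal (g (x - y)) ∂ν[|B]}) ^ (1 / r) := by
        gcongr
    _ ≤ C * ν[|B] univ := hT _ inferInstance cond_absolutelyContinuous l hl
    _ = C := by rw [measure_univ, mul_one]

end WeakType

section Radial

variable {E : Type*} [NormedAddCommGroup E] [NormedSpace ℝ E] [FiniteDimensional ℝ E]
  [MeasurableSpace E] [BorelSpace E] (μ : Measure E) [μ.IsAddHaarMeasure]

theorem measure_norm_mem_le_iSup_closedBall [Nontrivial E] (A : Set ℝ) :
    μ {x | ‖x‖ ∈ A} ≤ ⨆ q ∈ {q : ℚ | ∃ s ∈ A, (q : ℝ) < s}, μ (closedBall 0 q) := by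
  set Q := {q : ℚ | ∃ s ∈ A, (q : ℝ) < s}
  -- a norm in `A` that no element of `A` exceeds is `max A`
  have hcover : {x | ‖x‖ ∈ A} ⊆ (⋃ q ∈ Q, closedBall (0 : E) q) ∪ sphere 0 (sSup A) := by
    intro x hx
    by_cases h : ∃ s ∈ A, ‖x‖ < s
    · obtain ⟨s, hs, hxs⟩ := h
      obtain ⟨q, hxq, hqs⟩ := exists_rat_btwn hxs
      exact Or.inl (mem_biUnion (x := q) ⟨s, hs, hqs⟩ (mem_closedBall_zero_iff.2 hxq.le))
    · push Not at h
      exact Or.inr <| mem_sphere_zero_iff_norm.2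
        (IsGreatest.csSup_eq (⟨hx, h⟩ : IsGreatest A ‖x‖)).symm
  have hdir : DirectedOn (Function.onFun (· ⊆ ·) fun q : ℚ ↦ closedBall (0 : E) q) Q :=
    (Std.Total.directedOn (r := (· ≤ ·)) Q).mono fun a b h ↦
      closedBall_subset_closedBall (by exact_mod_cast h)
  calc μ {x | ‖x‖ ∈ A}
      ≤ μ (⋃ q ∈ Q, closedBall (0 : E) q) + μ (sphere 0 (sSup A)) :=
        (measure_mono hcover).trans (measure_union_le _ _)
    _ = ⨆ q ∈ Q, μ (closedBall 0 q) := by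
        rw [Measure.addHaar_sphere, add_zero, measure_biUnion_eq_iSup Q.to_countable hdir]

variable {μ}

theorem ConvolutionWeakTypeBound.ofReal_mul_measure_closedBall_rpow_le {g : E → ℝ}
    {G : ℝ → ℝ} {r : ℝ} {C : ℝ≥0∞} (hT : ConvolutionWeakTypeBound μ g r C) (hr : 0 ≤ r)
    (hgG : ∀ x, g x = G ‖x‖) (hG : AntitoneOn G (Ici 0)) {l R s : ℝ} (hl : 0 < l)
    (hs : 0 ≤ s) (hls : l < G s) (hRs : R < s) :
    ENNReal.ofReal l * μ (closedBall 0 R) ^ (1 / r) ≤ C := by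
  refine hT.ofReal_mul_measure_rpow_le hr hl hls (B := ball 0 (s - R)) measurableSet_ball
    (measure_ball_pos μ 0 (sub_pos.2 hRs)).ne' measure_ball_lt_top.ne fun x hx y hy ↦ ?_
  rw [hgG]
  refine hG (norm_nonneg _) hs ?_
  calc ‖x - y‖ ≤ ‖x‖ + ‖y‖ := norm_sub_le x y
    _ ≤ s := by linarith [mem_closedBall_zero_iff.1 hx, mem_ball_zero_iff.1 hy]

theorem ConvolutionWeakTypeBound.ofReal_mul_measure_setOf_lt_rpow_le {g : E → ℝ}
    {G : ℝ → ℝ} {r : ℝ} {C : ℝ≥0∞} (hT : ConvolutionWeakTypeBound μ g r C) (hr : 0 < r)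
    (hgG : ∀ x, g x = G ‖x‖) (hG : AntitoneOn G (Ici 0)) {l : ℝ} (hl : 0 < l) :
    ENNReal.ofReal l * μ {x | l < g x} ^ (1 / r) ≤ C := by
  -- in dimension zero the sphere `{0}` is not null, but `{g > l}` is empty or everything
  rcases subsingleton_or_nontrivial E with hE | hE
  · rcases eq_empty_or_nonempty {x | l < g x} with hS | ⟨x₀, hx₀⟩
    · simp [hS, ENNReal.zero_rpow_of_pos (inv_pos.2 hr)]
    · exact hT.ofReal_mul_measure_rpow_le hr.le hl hx₀ MeasurableSet.univ
        (IsOpen.measure_ne_zero μ isOpen_univ univ_nonempty) (measure_ne_top μ univ)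
        fun x _ y _ ↦ (congrArg g (Subsingleton.elim x₀ (x - y))).le
  set A := {s : ℝ | 0 ≤ s ∧ l < G s}
  set Q := {q : ℚ | ∃ s ∈ A, (q : ℝ) < s}
  have hS : {x | l < g x} = {x | ‖x‖ ∈ A} := by ext x; simp [A, hgG]
  have hrpow := map_iSup₂ (ENNReal.orderIsoRpow (1 / r) (one_div_pos.2 hr))
    fun (q : ℚ) (_ : q ∈ Q) ↦ μ (closedBall 0 q)
  simp only [ENNReal.orderIsoRpow_apply] at hrpow
  calc ENNReal.ofReal l * μ {x | l < g x} ^ (1 / r)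
      ≤ ENNReal.ofReal l * (⨆ q ∈ Q, μ (closedBall 0 q)) ^ (1 / r) := by
        rw [hS]
        gcongr
        exact measure_norm_mem_le_iSup_closedBall μ A
    _ = ⨆ q ∈ Q, ENNReal.ofReal l * μ (closedBall 0 q) ^ (1 / r) := by
        simp only [hrpow, ENNReal.mul_iSup]
    _ ≤ C := iSup₂_le fun _ ⟨_, ⟨hs, hls⟩, hqs⟩ ↦
        hT.ofReal_mul_measure_closedBall_rpow_le hr.le hgG hG hl hs hls hqs

end Radial

/-- If `g` is nonnegative, radial and radially decreasing, and the convolution map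
`T_g μ(x) = ∫ g(x-y) dμ(y)` satisfies `‖T_g μ‖_{L^{r,∞}} ≤ C μ(ℝⁿ)` for all finite positive
absolutely continuous measures `μ`, then `g ∈ L^{r,∞}` with `‖g‖_{L^{r,∞}} ≤ C`. -/
theorem stmt_16 {n : ℕ} (r : ℝ) (hr1 : 1 < r)
    (g : EuclideanSpace ℝ (Fin n) → ℝ) (hg0 : ∀ x, 0 ≤ g x)
    (G : ℝ → ℝ) (hgG : ∀ x : EuclideanSpace ℝ (Fin n), g x = G ‖x‖)
    (hGanti : AntitoneOn G (Set.Ici 0))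
    (C : ℝ≥0∞)
    (hbound : ∀ μ : Measure (EuclideanSpace ℝ (Fin n)), IsFiniteMeasure μ → μ ≪ volume →
      ∀ l : ℝ, 0 < l →
        ENNReal.ofReal l *
            (volume {x : EuclideanSpace ℝ (Fin n) |
              ENNReal.ofReal l < ∫⁻ y, ENNReal.ofReal (g (x - y)) ∂μ}) ^ (1 / r)
          ≤ C * μ Set.univ) :
    ∀ l : ℝ, 0 < l →
      ENNReal.ofReal l *
          (volume {x : EuclideanSpace ℝ (Fin n) | l < |g x|}) ^ (1 / r) ≤ C := by
  intro l hl
  have hT : ConvolutionWeakTypeBound volume g r C := hbound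
  simp_rw [abs_of_nonneg (hg0 _)]
  exact hT.ofReal_mul_measure_setOf_lt_rpow_le (by linarith) hgG hGanti hl
end

section
/- Let r ∈ (1,∞). For a nonnegative radial, radially decreasing function g on ℝⁿ, the following are equivalent: (1) g ∈ L^{r,∞}(ℝⁿ); (2) the convolution operator T_g(f) = g ∗ f is bounded from L¹(ℝⁿ) to L^{r,∞}(ℝⁿ). -/
open MeasureTheory Metric Set Filter
open scoped ENNReal Topology

/-!
If `g ∈ L^{r,∞}`, split `g` at a height `M`. The part below `M` contributes at most `M ‖f‖₁` to
`g ∗ f`; by the layer-cake formula the part above `M` is integrable with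
`‖g 1_{|g| > M}‖₁ ≲ ‖g‖_{r,∞}^r M^{1-r}`, so Chebyshev controls where it exceeds `l / 2`.
Choosing `M ‖f‖₁ = l / 2` gives the weak-type bound.

Conversely, test the operator on the indicator of the ball `B(0, ε)`: since `g` is radially
decreasing, `g ∗ 1_B ≥ |B| G(‖x‖ + ε)`, so the sets `{G(‖x‖ + ε) > l}` have measure at most
`(C / l)^r` uniformly in `ε`. As `ε → 0` they exhaust `{g > l}` up to a sphere, which is null
(in dimension zero the measure is finite and `g` is bounded).
-/

theorem ofReal_mul_rpow_one_div_le_iff {m A : ℝ≥0∞} {s p : ℝ} (hs : 0 < s) (hp : 0 < p) :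
    ENNReal.ofReal s * m ^ (1 / p) ≤ A ↔ m ≤ (A / ENNReal.ofReal s) ^ p := by
  rw [one_div, ← ENNReal.rpow_le_rpow_iff (inv_pos.2 hp) (x := m), ENNReal.rpow_rpow_inv hp.ne',
    ENNReal.le_div_iff_mul_le (.inl (ENNReal.ofReal_pos.2 hs).ne') (.inl ENNReal.ofReal_ne_top),
    mul_comm]

theorem div_ofReal_rpow {a : ℝ≥0∞} {s r : ℝ} (hs : 0 < s) (hr : 0 ≤ r) :
    (a / ENNReal.ofReal s) ^ r = a ^ r * ENNReal.ofReal (s ^ (-r)) := by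
  rw [ENNReal.div_rpow_of_nonneg _ _ hr, div_eq_mul_inv, ENNReal.ofReal_rpow_of_pos hs,
    ← ENNReal.ofReal_inv_of_pos (by positivity), Real.rpow_neg hs.le]

section wnormOn

variable {α : Type*} [MeasurableSpace α] {μ : Measure α} {f : α → ℝ} {p : ℝ}

theorem wnormOn_univ_le_iff {C : ℝ≥0∞} :
    wnormOn μ f p univ ≤ C ↔
      ∀ l : ℝ, 0 < l → ENNReal.ofReal l * μ {x | l < |f x|} ^ (1 / p) ≤ C := by
  simp only [wnormOn, univ_inter, iSup₂_le_iff]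

theorem measure_lt_abs_le_wnormOn (hp : 0 < p) {s : ℝ} (hs : 0 < s) :
    μ {x | s < |f x|} ≤ (wnormOn μ f p univ / ENNReal.ofReal s) ^ p :=
  (ofReal_mul_rpow_one_div_le_iff hs hp).1 (wnormOn_univ_le_iff.1 le_rfl s hs)

theorem wnormOn_univ_le_of_abs_le (hp : 0 < p) {B : ℝ} (hB : ∀ x, |f x| ≤ B) :
    wnormOn μ f p univ ≤ ENNReal.ofReal B * μ univ ^ (1 / p) := by
  refine wnormOn_univ_le_iff.2 fun l hl => ?_
  rcases lt_or_ge l B with hlB | hBl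
  · gcongr
    exact subset_univ _
  · have : {x | l < |f x|} = ∅ :=
      eq_empty_of_forall_notMem fun x hx => (hx.trans_le (hB x)).not_ge hBl
    simp [this, ENNReal.zero_rpow_of_pos (inv_pos.2 hp)]

end wnormOn

theorem lintegral_Ioi_max_rpow_neg {M r : ℝ} (hM : 0 < M) (hr : 1 < r) :
    ∫⁻ t in Ioi 0, ENNReal.ofReal (max t M ^ (-r)) =
      ENNReal.ofReal (M ^ (1 - r) * (r / (r - 1))) := by
  have hr1 : 0 < r - 1 := sub_pos.2 hr
  have hIoc :
      ∫⁻ t in Ioc 0 M, ENNReal.ofReal (max t M ^ (-r)) = ENNReal.ofReal (M ^ (1 - r)) := by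
    rw [setLIntegral_congr_fun measurableSet_Ioc fun t ht => by rw [max_eq_right ht.2],
      setLIntegral_const, Real.volume_Ioc, sub_zero, ← ENNReal.ofReal_mul (by positivity),
      sub_eq_neg_add, Real.rpow_add_one hM.ne']
  have hIoi : ∫⁻ t in Ioi M, ENNReal.ofReal (max t M ^ (-r)) =
      ENNReal.ofReal (M ^ (1 - r) / (r - 1)) := by
    rw [setLIntegral_congr_fun measurableSet_Ioi fun t ht => by rw [max_eq_left (le_of_lt ht)],
      ← ofReal_integral_eq_lintegral_ofReal (integrableOn_Ioi_rpow_of_lt (by linarith) hM)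
        ((ae_restrict_iff' measurableSet_Ioi).2 (ae_of_all _ fun t ht => by
          have : 0 < t := hM.trans ht
          positivity)),
      integral_Ioi_rpow_of_lt (by linarith) hM]
    congr 1
    rw [show -r + 1 = 1 - r by ring, ← neg_div_neg_eq, neg_neg, neg_sub]
  rw [← Ioc_union_Ioi_eq_Ioi hM.le, lintegral_union measurableSet_Ioi (Ioc_disjoint_Ioi le_rfl),
    hIoc, hIoi, ← ENNReal.ofReal_add (by positivity) (by positivity)]
  congr 1
  field_simp
  ring

theorem setLIntegral_lt_le_of_measure_lt_le {α : Type*} [MeasurableSpace α] {μ : Measure α}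
    {φ : α → ℝ} (hφ : Measurable φ) {a : ℝ≥0∞} (ha : a ≠ ⊤) {r : ℝ} (hr : 1 < r)
    (hdist : ∀ t : ℝ, 0 < t → μ {x | t < φ x} ≤ (a / ENNReal.ofReal t) ^ r) {M : ℝ} (hM : 0 < M) :
    ∫⁻ x in {x | M < φ x}, ENNReal.ofReal (φ x) ∂μ ≤
      a ^ r * ENNReal.ofReal (M ^ (1 - r) * (r / (r - 1))) := by
  have hS : MeasurableSet {x | M < φ x} := measurableSet_lt measurable_const hφ
  have hpos : ∀ᵐ x ∂μ.restrict {x | M < φ x}, 0 ≤ φ x :=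
    (ae_restrict_iff' hS).2 (ae_of_all _ fun x hx => (hM.trans hx).le)
  rw [lintegral_eq_lintegral_meas_lt _ hpos hφ.aemeasurable,
    ← lintegral_Ioi_max_rpow_neg hM hr,
    ← lintegral_const_mul' _ _ (ENNReal.rpow_ne_top_of_nonneg (by linarith) ha)]
  refine setLIntegral_mono' measurableSet_Ioi fun t ht => ?_
  have hset : {x | t < φ x} ∩ {x | M < φ x} = {x | max t M < φ x} := by
    ext x
    simp
  rw [Measure.restrict_apply' hS, hset, ← div_ofReal_rpow (lt_max_of_lt_right hM) (by linarith)]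
  exact hdist _ (lt_max_of_lt_right hM)

section Convolution

variable {E : Type*} [MeasurableSpace E]

def ConvolutionWeakType [Sub E] (μ : Measure E) (g : E → ℝ) (r : ℝ) (C : ℝ≥0∞) : Prop :=
  ∀ f : E → ℝ, Integrable f μ → ∀ l : ℝ, 0 < l →
    ENNReal.ofReal l * (μ {x | l < |∫ y, g (x - y) * f y ∂μ|}) ^ (1 / r) ≤
      C * ENNReal.ofReal (∫ y, |f y| ∂μ)

theorem enorm_integral_sub_mul_le [Sub E] {μ : Measure E} (g : E → ℝ) {f : E → ℝ}
    (hf : AEStronglyMeasurable f μ) (M : ℝ) (x : E) :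
    ‖∫ y, g (x - y) * f y ∂μ‖ₑ ≤
      ENNReal.ofReal M * ∫⁻ y, ‖f y‖ₑ ∂μ +
        ∫⁻ y, {z | M < |g z|}.indicator (fun z => ENNReal.ofReal |g z|) (x - y) * ‖f y‖ₑ ∂μ := by
  have hsplit : ∀ z,
      ‖g z‖ₑ ≤ ENNReal.ofReal M + {z | M < |g z|}.indicator (fun z => ENNReal.ofReal |g z|) z := by
    intro z
    rw [Real.enorm_eq_ofReal_abs]
    by_cases hz : z ∈ {z | M < |g z|}
    · rw [indicator_of_mem hz]
      exact le_add_self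
    · rw [indicator_of_notMem hz, add_zero]
      exact ENNReal.ofReal_le_ofReal (not_lt.1 hz)
  calc ‖∫ y, g (x - y) * f y ∂μ‖ₑ ≤ ∫⁻ y, ‖g (x - y)‖ₑ * ‖f y‖ₑ ∂μ := by
        simpa only [enorm_mul] using enorm_integral_le_lintegral_enorm (fun y => g (x - y) * f y)
    _ ≤ ∫⁻ y, ENNReal.ofReal M * ‖f y‖ₑ +
          {z | M < |g z|}.indicator (fun z => ENNReal.ofReal |g z|) (x - y) * ‖f y‖ₑ ∂μ := by
        gcongr with y
        rw [← add_mul]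
        gcongr
        exact hsplit _
    _ = _ := by
        rw [lintegral_add_left' (hf.enorm.const_mul _), lintegral_const_mul'' _ hf.enorm]

theorem setOf_lt_abs_integral_sub_mul_eq_empty [Sub E] {μ : Measure E} (g : E → ℝ) {f : E → ℝ}
    (hf : f =ᵐ[μ] 0) {l : ℝ} (hl : 0 ≤ l) :
    {x | l < |∫ y, g (x - y) * f y ∂μ|} = ∅ := by
  refine eq_empty_of_forall_notMem fun x (hx : l < _) => ?_
  rw [integral_eq_zero_of_ae (hf.mono fun y hy => by simp [hy]), abs_zero] at hx
  exact hl.not_gt hx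

variable [AddGroup E] [MeasurableAdd₂ E] [MeasurableNeg E] {μ : Measure E} [SFinite μ]
  [μ.IsAddRightInvariant] {g : E → ℝ} {r : ℝ}

theorem lintegral_lintegral_sub_mul {k h : E → ℝ≥0∞} (hk : Measurable k) (hh : AEMeasurable h μ) :
    ∫⁻ x, ∫⁻ y, k (x - y) * h y ∂μ ∂μ = (∫⁻ z, k z ∂μ) * ∫⁻ y, h y ∂μ := by
  have hprod : AEMeasurable (Function.uncurry fun x y => k (x - y) * h y) (μ.prod μ) :=
    (hk.comp measurable_sub).aemeasurable.mul hh.comp_snd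
  rw [lintegral_lintegral_swap hprod, ← lintegral_const_mul'' _ hh]
  refine lintegral_congr fun y => ?_
  rw [lintegral_mul_const (f := fun x => k (x - y)) _ (hk.comp (measurable_sub_const y)),
    lintegral_sub_right_eq_self, mul_comm]

theorem measure_lt_abs_integral_sub_mul_le (hg : Measurable g) (hr : 1 < r)
    (hfin : wnormOn μ g r univ < ⊤) {f : E → ℝ} (hf : AEStronglyMeasurable f μ) {l M : ℝ}
    (hl : 0 < l) (hM : 0 < M)
    (hMf : ENNReal.ofReal M * ∫⁻ y, ‖f y‖ₑ ∂μ = ENNReal.ofReal (l / 2)) :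
    μ {x | l < |∫ y, g (x - y) * f y ∂μ|} ≤
      wnormOn μ g r univ ^ r * ENNReal.ofReal (M ^ (-r) * (r / (r - 1))) := by
  set a := wnormOn μ g r univ
  set F := ∫⁻ y, ‖f y‖ₑ ∂μ
  set k := {z | M < |g z|}.indicator (fun z => ENNReal.ofReal |g z|)
  have hk : Measurable k :=
    hg.abs.ennreal_ofReal.indicator (measurableSet_lt measurable_const hg.abs)
  have hsub : {x | l < |∫ y, g (x - y) * f y ∂μ|} ⊆
      {x | ENNReal.ofReal (l / 2) ≤ ∫⁻ y, k (x - y) * ‖f y‖ₑ ∂μ} := by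
    intro x (hx : l < _)
    by_contra hlt
    have : ENNReal.ofReal l < ENNReal.ofReal (l / 2) + ENNReal.ofReal (l / 2) :=
      calc ENNReal.ofReal l < ‖∫ y, g (x - y) * f y ∂μ‖ₑ := by
            rw [Real.enorm_eq_ofReal_abs]
            exact (ENNReal.ofReal_lt_ofReal_iff (hl.trans hx)).2 hx
        _ ≤ _ := hMf ▸ enorm_integral_sub_mul_le g hf M x
        _ ≤ _ := by gcongr; exact (not_le.1 hlt).le
    rw [← ENNReal.ofReal_add (by positivity) (by positivity), add_halves] at this
    exact this.false
  have htail : ∫⁻ z, k z ∂μ ≤ a ^ r * ENNReal.ofReal (M ^ (1 - r) * (r / (r - 1))) := by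
    rw [lintegral_indicator (measurableSet_lt measurable_const hg.abs)]
    exact setLIntegral_lt_le_of_measure_lt_le hg.abs hfin.ne hr
      (fun t ht => measure_lt_abs_le_wnormOn (by linarith) ht) hM
  refine (ENNReal.mul_le_mul_iff_right (ENNReal.ofReal_pos.2 (half_pos hl)).ne'
    ENNReal.ofReal_ne_top).1 ?_
  calc ENNReal.ofReal (l / 2) * μ {x | l < |∫ y, g (x - y) * f y ∂μ|}
      ≤ ENNReal.ofReal (l / 2) *
          μ {x | ENNReal.ofReal (l / 2) ≤ ∫⁻ y, k (x - y) * ‖f y‖ₑ ∂μ} := by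
        gcongr
    _ ≤ ∫⁻ x, ∫⁻ y, k (x - y) * ‖f y‖ₑ ∂μ ∂μ :=
        mul_meas_ge_le_lintegral₀
          ((hk.comp measurable_sub).aemeasurable.mul hf.enorm.comp_snd).lintegral_prod_right' _
    _ = (∫⁻ z, k z ∂μ) * F := lintegral_lintegral_sub_mul hk hf.enorm
    _ ≤ a ^ r * ENNReal.ofReal (M ^ (1 - r) * (r / (r - 1))) * F := by gcongr
    _ = ENNReal.ofReal (l / 2) * (a ^ r * ENNReal.ofReal (M ^ (-r) * (r / (r - 1)))) := by
        rw [← hMf, sub_eq_add_neg, Real.rpow_one_add' hM.le (by linarith), mul_assoc M,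
          ENNReal.ofReal_mul hM.le]
        ring

theorem convolutionWeakType_of_wnormOn_lt_top (hg : Measurable g) (hr : 1 < r)
    (hfin : wnormOn μ g r univ < ⊤) :
    ConvolutionWeakType μ g r
      (wnormOn μ g r univ * ENNReal.ofReal (2 * (r / (r - 1)) ^ (1 / r))) := by
  intro f hf l hl
  set a := wnormOn μ g r univ
  set c := r / (r - 1)
  have hr0 : 0 < r := by linarith
  have hc : 0 < c := div_pos hr0 (by linarith)
  set F := ∫⁻ y, ‖f y‖ₑ ∂μ
  have hF : ENNReal.ofReal (∫ y, |f y| ∂μ) = F := by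
    simpa only [Real.norm_eq_abs] using ofReal_integral_norm_eq_lintegral_enorm hf
  rw [hF]
  rcases eq_or_ne F 0 with hF0 | hF0
  · have hf0 : f =ᵐ[μ] 0 :=
      ((lintegral_eq_zero_iff' hf.1.enorm).1 hF0).mono fun y hy => enorm_eq_zero.1 hy
    simp [setOf_lt_abs_integral_sub_mul_eq_empty g hf0 hl.le,
      ENNReal.zero_rpow_of_pos (inv_pos.2 hr0)]
  have hFtop : F ≠ ⊤ := hf.2.ne
  have hFr : 0 < F.toReal := ENNReal.toReal_pos hF0 hFtop
  set M := l / (2 * F.toReal)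
  have hM : 0 < M := by positivity
  have hMf : ENNReal.ofReal M * F = ENNReal.ofReal (l / 2) := by
    rw [← ENNReal.ofReal_toReal hFtop, ← ENNReal.ofReal_mul hM.le]
    congr 1
    simp only [M]
    field_simp
  calc ENNReal.ofReal l * μ {x | l < |∫ y, g (x - y) * f y ∂μ|} ^ (1 / r)
      ≤ ENNReal.ofReal l * (a ^ r * ENNReal.ofReal (M ^ (-r) * c)) ^ (1 / r) := by
        gcongr
        exact measure_lt_abs_integral_sub_mul_le hg hr hfin hf.1 hl hM hMf
    _ = a * ENNReal.ofReal (l / M * c ^ (1 / r)) := by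
        rw [ENNReal.mul_rpow_of_nonneg _ _ (by positivity), ← ENNReal.rpow_mul,
          mul_one_div_cancel hr0.ne', ENNReal.rpow_one,
          ENNReal.ofReal_rpow_of_nonneg (by positivity) (by positivity),
          Real.mul_rpow (by positivity) hc.le, ← Real.rpow_mul hM.le, neg_mul,
          mul_one_div_cancel hr0.ne', Real.rpow_neg_one, mul_left_comm,
          ← ENNReal.ofReal_mul hl.le, ← mul_assoc, ← div_eq_mul_inv l M]
    _ = a * ENNReal.ofReal (2 * c ^ (1 / r)) * F := by
        rw [mul_assoc, ← ENNReal.ofReal_toReal (a := F) hFtop,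
          ← ENNReal.ofReal_mul (by positivity)]
        congr 2
        simp only [M]
        field_simp

end Convolution

theorem AntitoneOn.measurable_comp_norm {E : Type*} [NormedAddCommGroup E] [MeasurableSpace E]
    [OpensMeasurableSpace E] {G : ℝ → ℝ} (hG : AntitoneOn G (Ici 0)) :
    Measurable fun x : E => G ‖x‖ := by
  have hanti : Antitone fun t => G (max t 0) := fun s t hst =>
    hG (le_max_right s 0) (le_max_right t 0) (max_le_max_right 0 hst)
  have hcomp : (fun x : E => G ‖x‖) = (fun t => G (max t 0)) ∘ norm :=
    funext fun x => by simp only [Function.comp, max_eq_left (norm_nonneg x)]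
  exact hcomp ▸ hanti.measurable.comp measurable_norm

section RadialKernel

variable {E : Type*} [NormedAddCommGroup E] [NormedSpace ℝ E] [FiniteDimensional ℝ E]
  [MeasurableSpace E] [BorelSpace E] {μ : Measure E} [μ.IsAddHaarMeasure] {G : ℝ → ℝ}

theorem mul_measureReal_ball_le_setIntegral {g : E → ℝ} (hgG : ∀ x, g x = G ‖x‖)
    (hG : AntitoneOn G (Ici 0)) (x : E) (ε : ℝ) :
    G (‖x‖ + ε) * μ.real (ball 0 ε) ≤ ∫ y in ball (0 : E) ε, g (x - y) ∂μ := by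
  have hBtop : μ (ball (0 : E) ε) ≠ ⊤ := measure_ball_lt_top.ne
  have hg : Measurable g := by simpa only [← hgG] using hG.measurable_comp_norm (E := E)
  have hlow : ∀ y ∈ ball (0 : E) ε, G (‖x‖ + ε) ≤ g (x - y) := fun y hy => by
    have hyε := mem_ball_zero_iff.1 hy
    rw [hgG]
    exact hG (mem_Ici.2 (norm_nonneg _)) (mem_Ici.2 (by linarith [norm_nonneg x, norm_nonneg y]))
      (by linarith [norm_sub_le x y])
  have hup : ∀ y, g (x - y) ≤ G 0 := fun y => by
    rw [hgG]
    exact hG (mem_Ici.2 le_rfl) (mem_Ici.2 (norm_nonneg _)) (norm_nonneg _)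
  have hint : IntegrableOn (fun y => g (x - y)) (ball (0 : E) ε) μ :=
    Measure.integrableOn_of_bounded hBtop
      (hg.comp (measurable_const.sub measurable_id)).aestronglyMeasurable
      ((ae_restrict_iff' measurableSet_ball).2 (ae_of_all _ fun y hy =>
        abs_le_max_abs_abs (hlow y hy) (hup y)))
  calc G (‖x‖ + ε) * μ.real (ball 0 ε) = ∫ _ in ball (0 : E) ε, G (‖x‖ + ε) ∂μ := by
        rw [setIntegral_const, smul_eq_mul, mul_comm]
    _ ≤ ∫ y in ball (0 : E) ε, g (x - y) ∂μ :=
        setIntegral_mono_on (integrableOn_const hBtop) hint measurableSet_ball hlow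

theorem measure_lt_comp_norm_add_le {g : E → ℝ} (hgG : ∀ x, g x = G ‖x‖)
    (hG : AntitoneOn G (Ici 0)) {r : ℝ} (hr : 0 < r) {C : ℝ≥0∞}
    (hT : ConvolutionWeakType μ g r C) {l ε : ℝ} (hl : 0 < l) (hε : 0 < ε) :
    μ {x | l < G (‖x‖ + ε)} ≤ (C / ENNReal.ofReal l) ^ r := by
  set B := ball (0 : E) ε
  have hBtop : μ B ≠ ⊤ := measure_ball_lt_top.ne
  have hV : 0 < μ.real B := ENNReal.toReal_pos (measure_ball_pos μ 0 hε).ne' hBtop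
  set f := B.indicator fun _ => (1 : ℝ)
  have hf : Integrable f μ :=
    (integrable_indicator_iff measurableSet_ball).2 (integrableOn_const hBtop)
  have hfV : ∫ y, |f y| ∂μ = μ.real B := by
    have habs : ∀ y, |f y| = f y := fun y =>
      abs_of_nonneg (indicator_nonneg (fun _ _ => zero_le_one) y)
    rw [integral_congr_ae (ae_of_all _ habs), integral_indicator measurableSet_ball,
      setIntegral_const, smul_eq_mul, mul_one]
  have hconv : {x | l < G (‖x‖ + ε)} ⊆ {x | l * μ.real B < |∫ y, g (x - y) * f y ∂μ|} := by
    intro x (hx : l < _)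
    calc l * μ.real B < G (‖x‖ + ε) * μ.real B := mul_lt_mul_of_pos_right hx hV
      _ ≤ ∫ y in B, g (x - y) ∂μ := mul_measureReal_ball_le_setIntegral hgG hG x ε
      _ = ∫ y, g (x - y) * f y ∂μ := by
          rw [← integral_indicator (s := B) measurableSet_ball]
          congr 1 with y
          by_cases hy : y ∈ B <;>
            simp only [f, indicator_of_mem, indicator_of_notMem, hy, mul_one, mul_zero,
              not_false_eq_true]
      _ ≤ |∫ y, g (x - y) * f y ∂μ| := le_abs_self _
  have hbound := hT f hf (l * μ.real B) (by positivity)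
  rw [hfV, ENNReal.ofReal_mul hl.le, mul_right_comm, ofReal_measureReal hBtop] at hbound
  rw [← ofReal_mul_rpow_one_div_le_iff hl hr]
  refine (ENNReal.mul_le_mul_iff_left (measure_ball_pos μ 0 hε).ne' hBtop).1
    (le_trans ?_ hbound)
  gcongr _ * μ ?_ ^ _ * _

theorem measure_lt_comp_norm_le_of_forall_add [Nontrivial E] (hG : AntitoneOn G (Ici 0))
    {l : ℝ} {B : ℝ≥0∞} (h : ∀ ε : ℝ, 0 < ε → μ {x | l < G (‖x‖ + ε)} ≤ B) :
    μ {x | l < G ‖x‖} ≤ B := by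
  set S := {x : E | l < G ‖x‖}
  set A : ℕ → Set E := fun k => {x | l < G (‖x‖ + 1 / (k + 1))}
  have hA : Monotone A := fun k j hkj x (hx : l < _) =>
    hx.trans_le (hG (mem_Ici.2 (by positivity)) (mem_Ici.2 (by positivity)) (by gcongr))
  have hinner : ∀ x ∈ S, ∀ y : E, ‖y‖ < ‖x‖ → y ∈ ⋃ k, A k := by
    intro x hx y hy
    obtain ⟨k, hk⟩ := exists_nat_one_div_lt (sub_pos.2 hy)
    exact mem_iUnion.2 ⟨k, hx.trans_le
      (hG (mem_Ici.2 (by positivity)) (mem_Ici.2 (norm_nonneg x)) (by linarith))⟩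
  -- the points of `S` outside every `A k` all have the same norm, so they lie on a null sphere
  have hrest : μ (S \ ⋃ k, A k) = 0 := by
    rcases (S \ ⋃ k, A k).eq_empty_or_nonempty with he | ⟨x₀, hx₀⟩
    · rw [he, measure_empty]
    refine measure_mono_null (fun x hx => ?_) (Measure.addHaar_sphere μ 0 ‖x₀‖)
    rw [mem_sphere_zero_iff_norm]
    by_contra hne
    rcases lt_or_gt_of_ne hne with hlt | hlt
    · exact hx.2 (hinner x₀ hx₀.1 x hlt)
    · exact hx₀.2 (hinner x hx.1 x₀ hlt)
  calc μ S ≤ μ (⋃ k, A k) := measure_mono_ae (ae_le_set.2 hrest)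
    _ = ⨆ k, μ (A k) := hA.measure_iUnion
    _ ≤ B := iSup_le fun k => h _ (by positivity)

theorem wnormOn_lt_top_of_convolutionWeakType {g : E → ℝ} (hg0 : ∀ x, 0 ≤ g x)
    (hgG : ∀ x, g x = G ‖x‖) (hG : AntitoneOn G (Ici 0)) {r : ℝ} (hr : 0 < r) {C : ℝ≥0∞}
    (hC : C < ⊤) (hT : ConvolutionWeakType μ g r C) :
    wnormOn μ g r univ < ⊤ := by
  rcases subsingleton_or_nontrivial E with hE | hE
  · have hμ : μ univ ≠ ⊤ := isCompact_univ.measure_ne_top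
    refine (wnormOn_univ_le_of_abs_le hr (B := |G 0|) fun x => ?_).trans_lt
      (ENNReal.mul_lt_top ENNReal.ofReal_lt_top (ENNReal.rpow_lt_top_of_nonneg (by positivity) hμ))
    rw [hgG, Subsingleton.elim x 0, norm_zero]
  refine lt_of_le_of_lt (wnormOn_univ_le_iff.2 fun l hl => ?_) hC
  have hS : {x | l < |g x|} = {x | l < G ‖x‖} := by
    simp_rw [abs_of_nonneg (hg0 _), hgG]
  rw [ofReal_mul_rpow_one_div_le_iff hl hr, hS]
  exact measure_lt_comp_norm_le_of_forall_add hG fun ε hε =>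
    measure_lt_comp_norm_add_le hgG hG hr hT hl hε

end RadialKernel

/-- For a nonnegative radial, radially decreasing `g` and `r ∈ (1,∞)`:
`g ∈ L^{r,∞}(ℝⁿ)` iff the convolution operator `T_g f = g ∗ f` is bounded
from `L¹(ℝⁿ)` to `L^{r,∞}(ℝⁿ)`. -/
theorem stmt_17 {n : ℕ} (r : ℝ) (hr1 : 1 < r)
    (g : EuclideanSpace ℝ (Fin n) → ℝ) (hg0 : ∀ x, 0 ≤ g x)
    (G : ℝ → ℝ) (hgG : ∀ x : EuclideanSpace ℝ (Fin n), g x = G ‖x‖)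
    (hGanti : AntitoneOn G (Set.Ici 0)) :
    wnormOn volume g r Set.univ < ⊤ ↔
      ∃ C : ℝ≥0∞, C < ⊤ ∧
        ∀ f : EuclideanSpace ℝ (Fin n) → ℝ, Integrable f →
          ∀ l : ℝ, 0 < l →
            ENNReal.ofReal l *
                (volume {x : EuclideanSpace ℝ (Fin n) | l < |∫ y, g (x - y) * f y|}) ^ (1 / r)
              ≤ C * ENNReal.ofReal (∫ y, |f y|) := by
  have hg : Measurable g := by
    simpa only [← hgG] using hGanti.measurable_comp_norm (E := EuclideanSpace ℝ (Fin n))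
  exact ⟨fun h => ⟨_, ENNReal.mul_lt_top h ENNReal.ofReal_lt_top,
      convolutionWeakType_of_wnormOn_lt_top hg hr1 h⟩,
    fun ⟨C, hC, hT⟩ => wnormOn_lt_top_of_convolutionWeakType hg0 hgG hGanti (by linarith) hC hT⟩
end
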